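/- arXiv:2603.14784 — 10 statements merged into one kernel-verified Lean document; each statement's English description precedes it below -/
import Mathlib

section
/- Let K be a field, let n ≥ 3 be a natural number, and let x, y, z, b, c, d be nonzero elements of K satisfying the three critical point equations of the leading order potential: (i) x/z + x/b = d·x⁻¹·y⁻ⁿ, (ii) y/c = b/y + z/y + n·d·x⁻¹·y⁻ⁿ, and (iii) x/z = z/y. Then: z + b ≠ 0, x·y = z², y^(n−2)·z³·(z+b) = b·d, y²·b = c·(z+b)·(n·z+b), and c^(n−2)·z⁶·(z+b)ⁿ·(n·z+b)^(n−2) = bⁿ·d². -/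
/-- consequences of the critical point equations of the leading order
potential of Woodward's multiplicity-free `U(2)`-manifold, over an arbitrary field. -/
theorem stmt_0 {K : Type*} [Field K] (n : ℕ) (hn : 3 ≤ n)
    (x y z b c d : K)
    (hx : x ≠ 0) (hy : y ≠ 0) (hz : z ≠ 0) (hb : b ≠ 0) (hc : c ≠ 0) (hd : d ≠ 0)
    (h1 : x / z + x / b = d * x⁻¹ * (y ^ n)⁻¹)
    (h2 : y / c = b / y + z / y + (n : K) * d * x⁻¹ * (y ^ n)⁻¹)
    (h3 : x / z = z / y) :
    z + b ≠ 0 ∧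
    x * y = z ^ 2 ∧
    y ^ (n - 2) * z ^ 3 * (z + b) = b * d ∧
    y ^ 2 * b = c * (z + b) * ((n : K) * z + b) ∧
    c ^ (n - 2) * z ^ 6 * (z + b) ^ n * ((n : K) * z + b) ^ (n - 2) = b ^ n * d ^ 2 := by
  obtain ⟨m, rfl⟩ : ∃ m, n = m + 3 := ⟨n - 3, by omega⟩
  field_simp at h1 h2 h3
  -- h1 : (x * b + x * z) * (x * y ^ (m + 3)) = d * (z * b)
  -- h2 : y * (y * (x * y ^ (m + 3))) = ((b + z) * (x * y ^ (m + 3)) + (↑m + 3) * d * y) * c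
  -- h3 : x * y = z * z
  have hE1 : x * y = z ^ 2 := by linear_combination h3
  have hzb : z + b ≠ 0 := by
    intro h
    have h0 : (x * b + x * z) * (x * y ^ (m + 3)) = 0 := by
      have : x * b + x * z = 0 := by linear_combination x * h
      rw [this, zero_mul]
    rw [show x ^ 2 * (b + z) * y ^ (m + 3) = (x * b + x * z) * (x * y ^ (m + 3)) by ring, h0,
      show z * b * d = d * (z * b) by ring] at h1
    exact mul_ne_zero hd (mul_ne_zero hz hb) h1.symm
  have hE2 : y ^ (m + 1) * z ^ 3 * (z + b) = b * d := by
    have hne : x ^ 2 * y ^ 2 ≠ 0 := mul_ne_zero (pow_ne_zero _ hx) (pow_ne_zero _ hy)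
    apply mul_left_cancel₀ hne
    linear_combination z ^ 3 * h1 - b * d * (x * y + z ^ 2) * h3
  have hE3 : y ^ 2 * b = c * (z + b) * (((m : K) + 3) * z + b) := by
    have hne : x * y ^ (m + 3) * z ≠ 0 :=
      mul_ne_zero (mul_ne_zero hx (pow_ne_zero _ hy)) hz
    apply mul_left_cancel₀ hne
    push_cast at h2
    linear_combination b * z * h2 + ((m : K) + 3) * c * (b + z) * x * y ^ (m + 3) * h3
      - ((m : K) + 3) * c * y * h1
  have p3 : (y ^ (m + 1)) ^ 2 * b ^ (m + 1)
      = c ^ (m + 1) * (z + b) ^ (m + 1) * (((m : K) + 3) * z + b) ^ (m + 1) := by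
    rw [pow_right_comm, ← mul_pow, hE3, mul_pow, mul_pow]
  have p2 : (y ^ (m + 1) * z ^ 3 * (z + b)) ^ 2 = (b * d) ^ 2 := by rw [hE2]
  have hE5 : c ^ (m + 1) * z ^ 6 * (z + b) ^ (m + 3) * (((m : K) + 3) * z + b) ^ (m + 1)
      = b ^ (m + 3) * d ^ 2 := by
    linear_combination (-(z ^ 6 * (z + b) ^ 2)) * p3 + b ^ (m + 1) * p2
  have hsub : m + 3 - 2 = m + 1 := by omega
  rw [hsub]
  push_cast
  exact ⟨hzb, hE1, hE2, hE3, hE5⟩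
end

section
/- Let K = HahnSeries ℝ ℂ be the field of Hahn series with real exponents and complex coefficients (containing the Novikov field), with additive valuation v = addVal. Let n ≥ 3 be a natural number, let λ₂ > λ₃ be real numbers, and let r be a real number with 2r > (n+4)λ₂ − (n+2)λ₃. Let b, c, d, z be nonzero elements of K with v(b) = λ₂, v(c) = λ₃, v(d) = r + n·λ₃. If c^(n−2)·z⁶·(z+b)ⁿ·(n·z+b)^(n−2) = bⁿ·d², then either v(z) = (2r + (2−n)λ₂ + (n+2)λ₃)/6 or v(z) = λ₂. -/
/-! Compare valuations of both sides. Unless `v(z) = λ₂`, both `z + b` and `n z + b` have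
valuation `min (v z) λ₂` (as `v(n) = 0`), so the equation becomes a linear relation for `v(z)`.
The bound on `r` makes it inconsistent with `v(z) < λ₂`, and for `v(z) > λ₂` it is solved by
the first value. -/

open HahnSeries

namespace HahnSeries

variable {Γ R : Type*} [AddCancelCommMonoid Γ] [LinearOrder Γ] [IsOrderedCancelAddMonoid Γ]
  [Ring R] [IsDomain R]

theorem addVal_C {r : R} (hr : r ≠ 0) : addVal Γ R (C r) = 0 := by
  rw [addVal_apply_of_ne (C_ne_zero hr), order_C]
  rfl

theorem addVal_natCast [CharZero R] {n : ℕ} (hn : n ≠ 0) : addVal Γ R n = 0 := by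
  rw [← map_natCast (C : R →+* R⟦Γ⟧)]
  exact addVal_C (Nat.cast_ne_zero.mpr hn)

end HahnSeries

theorem AddValuation.map_mul_add_of_ne {R Γ₀ : Type*} [Ring R]
    [LinearOrderedAddCommMonoidWithTop Γ₀] (v : AddValuation R Γ₀) {a x y : R} (ha : v a = 0)
    (h : v x ≠ v y) : v (a * x + y) = min (v x) (v y) := by
  rw [v.map_add_of_distinct_val (by rwa [v.map_mul, ha, zero_add]), v.map_mul, ha, zero_add]

-- `min μ l2` stands for `v(z + b) = v(n z + b)`; the bound `hr` rules out the branch `μ ≤ l2`.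
theorem six_mul_eq_of_valuation_balance {n l2 l3 r μ : ℝ} (hn : 0 ≤ n)
    (hr : 2 * r > (n + 4) * l2 - (n + 2) * l3)
    (h : (n - 2) * l3 + 6 * μ + n * min μ l2 + (n - 2) * min μ l2 = n * l2 + 2 * (r + n * l3)) :
    6 * μ = 2 * r + (2 - n) * l2 + (n + 2) * l3 := by
  rcases le_total μ l2 with hle | hle
  · rw [min_eq_left hle] at h
    nlinarith [mul_nonneg (by linarith : 0 ≤ n + 2) (sub_nonneg.2 hle)]
  · rw [min_eq_right hle] at h
    linarith

theorem stmt_2_general (n : ℕ) (hn : 3 ≤ n) (l2 l3 r : ℝ)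
    (hr : 2 * r > ((n : ℝ) + 4) * l2 - ((n : ℝ) + 2) * l3)
    (b c d z : HahnSeries ℝ ℂ)
    (hz : z ≠ 0)
    (hvb : addVal ℝ ℂ b = (l2 : WithTop ℝ))
    (hvc : addVal ℝ ℂ c = (l3 : WithTop ℝ))
    (hvd : addVal ℝ ℂ d = ((r + n * l3 : ℝ) : WithTop ℝ))
    (heq : c ^ (n - 2) * z ^ 6 * (z + b) ^ n * ((n : HahnSeries ℝ ℂ) * z + b) ^ (n - 2)
        = b ^ n * d ^ 2) :
    addVal ℝ ℂ z = (((2 * r + (2 - (n : ℝ)) * l2 + ((n : ℝ) + 2) * l3) / 6 : ℝ) : WithTop ℝ) ∨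
    addVal ℝ ℂ z = (l2 : WithTop ℝ) := by
  set v := addVal ℝ ℂ
  obtain ⟨μ, hμ⟩ := WithTop.ne_top_iff_exists.mp (v.ne_top_iff.mpr hz)
  rcases eq_or_ne μ l2 with rfl | hne
  · exact Or.inr hμ.symm
  have hzb : v z ≠ v b := by rw [← hμ, hvb]; exact_mod_cast hne
  have H := congrArg v heq
  simp only [v.map_mul, v.map_pow] at H
  rw [v.map_add_of_distinct_val hzb, v.map_mul_add_of_ne (addVal_natCast (by omega)) hzb,
    ← hμ, hvb, hvc, hvd] at H
  have H' : (n - 2) • l3 + 6 • μ + n • min μ l2 + (n - 2) • min μ l2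
      = n • l2 + 2 • (r + n * l3) := by
    exact_mod_cast H
  simp only [nsmul_eq_mul, Nat.cast_sub (by omega : 2 ≤ n), Nat.cast_ofNat] at H'
  left
  rw [← hμ, WithTop.coe_inj]
  linarith [six_mul_eq_of_valuation_balance (Nat.cast_nonneg n) hr H']

/-- possible valuations of solutions `z` of the reduced critical point
equation, in the Hahn series field `HahnSeries ℝ ℂ`. -/
theorem stmt_2 (n : ℕ) (hn : 3 ≤ n) (l2 l3 r : ℝ) (hl : l2 > l3)
    (hr : 2 * r > ((n : ℝ) + 4) * l2 - ((n : ℝ) + 2) * l3)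
    (b c d z : HahnSeries ℝ ℂ)
    (hb : b ≠ 0) (hc : c ≠ 0) (hd : d ≠ 0) (hz : z ≠ 0)
    (hvb : addVal ℝ ℂ b = (l2 : WithTop ℝ))
    (hvc : addVal ℝ ℂ c = (l3 : WithTop ℝ))
    (hvd : addVal ℝ ℂ d = ((r + n * l3 : ℝ) : WithTop ℝ))
    (heq : c ^ (n - 2) * z ^ 6 * (z + b) ^ n * ((n : HahnSeries ℝ ℂ) * z + b) ^ (n - 2)
        = b ^ n * d ^ 2) :
    addVal ℝ ℂ z = (((2 * r + (2 - (n : ℝ)) * l2 + ((n : ℝ) + 2) * l3) / 6 : ℝ) : WithTop ℝ) ∨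
    addVal ℝ ℂ z = (l2 : WithTop ℝ) :=
  stmt_2_general n hn l2 l3 r hr b c d z hz hvb hvc hvd heq
end

section
/- Let K = HahnSeries ℝ ℂ with additive valuation v = addVal. Let n ≥ 3 be a natural number, let λ₂ > λ₃ be real numbers, and let r be a real number. Let b, c, d, z be nonzero elements of K with v(b) = λ₂, v(c) = λ₃, v(d) = r + n·λ₃. Suppose c^(n−2)·z⁶·(z+b)ⁿ·(n·z+b)^(n−2) = bⁿ·d², v(z) = λ₂, and v(z+b) > λ₂. Then v(n·z+b) = λ₂ and v(z+b) = (2r − 4λ₂ + (n+2)λ₃)/n. -/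
open HahnSeries

/-! Since `n * z + b = (n - 1) * z + (z + b)` and `v (z + b) > v z`, the ultrametric property gives
`v (n * z + b) = v z = λ₂`. Applying `v` to the equation then leaves an equation that is linear in
`v (z + b)`, which is finite because `b` and `d` are nonzero. -/

section
variable {Γ R : Type*} [AddCancelCommMonoid Γ] [LinearOrder Γ] [IsOrderedCancelAddMonoid Γ]
  [Ring R] [IsDomain R] [CharZero R]

theorem HahnSeries.addVal_natCast_s5 {m : ℕ} (hm : m ≠ 0) : addVal Γ R m = 0 := by
  rw [addVal_apply, ← single_zero_natCast, orderTop_single (Nat.cast_ne_zero.mpr hm)]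
  rfl

theorem HahnSeries.addVal_natCast_mul_add_of_lt {m : ℕ} (hm : 2 ≤ m) {z b : R⟦Γ⟧}
    (h : addVal Γ R z < addVal Γ R (z + b)) : addVal Γ R (m * z + b) = addVal Γ R z := by
  have hval : addVal Γ R ((m - 1 : ℕ) * z) = addVal Γ R z := by
    rw [AddValuation.map_mul, addVal_natCast_s5 (by omega), zero_add]
  have hsplit : (m : R⟦Γ⟧) * z + b = (m - 1 : ℕ) * z + (z + b) := by
    rw [← add_assoc, ← add_one_mul (α := R⟦Γ⟧), ← Nat.cast_add_one, Nat.sub_add_cancel (by omega)]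
  rw [hsplit, AddValuation.map_add_eq_of_lt_left _ (hval ▸ h), hval]
end

theorem stmt_5_general (n : ℕ) (hn : 3 ≤ n) (l2 l3 r : ℝ)
    (b c d z : HahnSeries ℝ ℂ)
    (hb : b ≠ 0) (hd : d ≠ 0)
    (hvb : addVal ℝ ℂ b = (l2 : WithTop ℝ))
    (hvc : addVal ℝ ℂ c = (l3 : WithTop ℝ))
    (hvd : addVal ℝ ℂ d = ((r + n * l3 : ℝ) : WithTop ℝ))
    (heq : c ^ (n - 2) * z ^ 6 * (z + b) ^ n * ((n : HahnSeries ℝ ℂ) * z + b) ^ (n - 2)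
        = b ^ n * d ^ 2)
    (hvz : addVal ℝ ℂ z = (l2 : WithTop ℝ))
    (hvzb : (l2 : WithTop ℝ) < addVal ℝ ℂ (z + b)) :
    addVal ℝ ℂ ((n : HahnSeries ℝ ℂ) * z + b) = (l2 : WithTop ℝ) ∧
    addVal ℝ ℂ (z + b) = (((2 * r - 4 * l2 + ((n : ℝ) + 2) * l3) / n : ℝ) : WithTop ℝ) := by
  have hnzb : addVal ℝ ℂ (n * z + b) = l2 :=
    hvz ▸ addVal_natCast_mul_add_of_lt (by omega) (hvz ▸ hvzb)
  refine ⟨hnzb, ?_⟩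
  have hzb : z + b ≠ 0 := by
    rintro hzb
    rw [hzb, zero_pow (by omega), mul_zero, zero_mul, eq_comm] at heq
    simp [hb, hd] at heq
  have hval := congrArg (addVal ℝ ℂ) heq
  simp only [AddValuation.map_mul, AddValuation.map_pow, hvb, hvc, hvd, hvz, hnzb,
    addVal_apply_of_ne hzb] at hval
  rw [addVal_apply_of_ne hzb]
  norm_cast at hval ⊢
  simp only [nsmul_eq_mul, Nat.cast_sub (by omega : 2 ≤ n), Nat.cast_ofNat] at hval
  rw [eq_div_iff (by positivity)]
  push_cast
  linarith

/-- valuations in Case (b)(i) of the critical point analysis, in the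
Hahn series field `HahnSeries ℝ ℂ`. -/
theorem stmt_5 (n : ℕ) (hn : 3 ≤ n) (l2 l3 r : ℝ) (hl : l2 > l3)
    (b c d z : HahnSeries ℝ ℂ)
    (hb : b ≠ 0) (hc : c ≠ 0) (hd : d ≠ 0) (hz : z ≠ 0)
    (hvb : addVal ℝ ℂ b = (l2 : WithTop ℝ))
    (hvc : addVal ℝ ℂ c = (l3 : WithTop ℝ))
    (hvd : addVal ℝ ℂ d = ((r + n * l3 : ℝ) : WithTop ℝ))
    (heq : c ^ (n - 2) * z ^ 6 * (z + b) ^ n * ((n : HahnSeries ℝ ℂ) * z + b) ^ (n - 2)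
        = b ^ n * d ^ 2)
    (hvz : addVal ℝ ℂ z = (l2 : WithTop ℝ))
    (hvzb : (l2 : WithTop ℝ) < addVal ℝ ℂ (z + b)) :
    addVal ℝ ℂ ((n : HahnSeries ℝ ℂ) * z + b) = (l2 : WithTop ℝ) ∧
    addVal ℝ ℂ (z + b) = (((2 * r - 4 * l2 + ((n : ℝ) + 2) * l3) / n : ℝ) : WithTop ℝ) :=
  stmt_5_general n hn l2 l3 r b c d z hb hd hvb hvc hvd heq hvz hvzb
end

section
/- Let n ≥ 3 be an odd natural number and let ζ = exp(2πi/3) ∈ ℂ. The set of triples (x,y,z) of nonzero complex numbers satisfying the leading term equations y² = 1, x²·yⁿ = z, and z² = x·y is exactly the six-element set {(1,1,1), (ζ,1,ζ²), (ζ²,1,ζ), (−1,−1,−1), (−ζ²,−1,−ζ), (−ζ,−1,−ζ²)}. -/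
/-!
Since `y ^ 2 = 1`, the sign `y = ±1` satisfies `y ^ n = y` for odd `n`, so the second equation
reads `z = y x²`. Substituting into the third gives `x⁴ = x y`, i.e. `x³ = y`, so `y x` is a
cube root of unity `ω ^ i`. Hence the solutions are `(y ω^i, y, y ω^(2i))` with `y = ±1` and
`i < 3`.
-/

open Complex

section LeadingTerms

variable {K : Type*} [Field K]

theorem pow_eq_self_of_odd_of_sq_eq_one {n : ℕ} (hn : Odd n) {y : K} (hy : y ^ 2 = 1) :
    y ^ n = y := by
  obtain ⟨k, rfl⟩ := hn
  rw [pow_succ, pow_mul, hy, one_pow, one_mul]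

theorem leadingTerm_equations_iff {ω : K} (hω : IsPrimitiveRoot ω 3) {n : ℕ} (hn : Odd n)
    (x y z : K) :
    (x ≠ 0 ∧ y ≠ 0 ∧ z ≠ 0 ∧ y ^ 2 = 1 ∧ x ^ 2 * y ^ n = z ∧ z ^ 2 = x * y) ↔
      (y = 1 ∨ y = -1) ∧ ∃ i < 3, x = y * ω ^ i ∧ z = y * ω ^ (2 * i) := by
  constructor
  · rintro ⟨hx, -, -, hy, rfl, hxy⟩
    rw [pow_eq_self_of_odd_of_sq_eq_one hn hy] at hxy ⊢
    have hx3 : x ^ 3 = y := mul_left_cancel₀ hx (by linear_combination hxy - x ^ 4 * hy)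
    have hyx : (y * x) ^ 3 = 1 := by linear_combination y ^ 3 * hx3 + (y ^ 2 + 1) * hy
    obtain ⟨i, hi, hωi⟩ := hω.eq_pow_of_pow_eq_one hyx
    have hx_eq : x = y * ω ^ i := by rw [hωi]; linear_combination (-x) * hy
    refine ⟨sq_eq_one_iff.mp hy, i, hi, hx_eq, ?_⟩
    rw [hx_eq]
    linear_combination y * ω ^ (2 * i) * hy
  · rintro ⟨hy, i, -, rfl, rfl⟩
    have hy2 : y ^ 2 = 1 := by rcases hy with rfl | rfl <;> norm_num
    have hy0 : y ≠ 0 := by rintro rfl; simp at hy2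
    have hω0 : ω ≠ 0 := hω.ne_zero three_ne_zero
    refine ⟨by positivity, hy0, by positivity, hy2, ?_, ?_⟩
    · rw [pow_eq_self_of_odd_of_sq_eq_one hn hy2]
      linear_combination y * ω ^ (2 * i) * hy2
    · have hω3i : ω ^ (3 * i) = 1 := by rw [pow_mul, hω.pow_eq_one, one_pow]
      linear_combination y ^ 2 * ω ^ i * hω3i

end LeadingTerms

theorem stmt_8_general (n : ℕ) (hodd : Odd n) :
    let ζ : ℂ := Complex.exp (2 * Real.pi * Complex.I / 3)
    {p : ℂ × ℂ × ℂ | p.1 ≠ 0 ∧ p.2.1 ≠ 0 ∧ p.2.2 ≠ 0 ∧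
        p.2.1 ^ 2 = 1 ∧ p.1 ^ 2 * p.2.1 ^ n = p.2.2 ∧ p.2.2 ^ 2 = p.1 * p.2.1} =
      {(1, 1, 1), (ζ, 1, ζ ^ 2), (ζ ^ 2, 1, ζ),
        (-1, -1, -1), (-ζ ^ 2, -1, -ζ), (-ζ, -1, -ζ ^ 2)} := by
  intro ζ
  have hζ : IsPrimitiveRoot ζ 3 := by simpa using Complex.isPrimitiveRoot_exp 3 (by norm_num)
  have hζ4 : ζ ^ 4 = ζ := by rw [pow_succ, hζ.pow_eq_one, one_mul]
  ext ⟨x, y, z⟩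
  simp only [Set.mem_ofPred_eq, leadingTerm_equations_iff hζ hodd, Set.mem_insert_iff,
    Set.mem_singleton_iff, Prod.mk.injEq]
  constructor
  · rintro ⟨rfl | rfl, i, hi, rfl, rfl⟩ <;> interval_cases i <;> simp [hζ4]
  · rintro (⟨rfl, rfl, rfl⟩ | ⟨rfl, rfl, rfl⟩ | ⟨rfl, rfl, rfl⟩ | ⟨rfl, rfl, rfl⟩ |
      ⟨rfl, rfl, rfl⟩ | ⟨rfl, rfl, rfl⟩)
    exacts [⟨by simp, 0, by simp⟩, ⟨by simp, 1, by simp⟩, ⟨by simp, 2, by simp [hζ4]⟩,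
      ⟨by simp, 0, by simp⟩, ⟨by simp, 2, by simp [hζ4]⟩, ⟨by simp, 1, by simp⟩]

/-- solutions of the leading term equations for odd `n ≥ 3`. -/
theorem stmt_8 (n : ℕ) (hn : 3 ≤ n) (hodd : Odd n) :
    let ζ : ℂ := Complex.exp (2 * Real.pi * Complex.I / 3)
    {p : ℂ × ℂ × ℂ | p.1 ≠ 0 ∧ p.2.1 ≠ 0 ∧ p.2.2 ≠ 0 ∧
        p.2.1 ^ 2 = 1 ∧ p.1 ^ 2 * p.2.1 ^ n = p.2.2 ∧ p.2.2 ^ 2 = p.1 * p.2.1} =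
      {(1, 1, 1), (ζ, 1, ζ ^ 2), (ζ ^ 2, 1, ζ),
        (-1, -1, -1), (-ζ ^ 2, -1, -ζ), (-ζ, -1, -ζ ^ 2)} :=
  stmt_8_general n hodd
end

section
/- Let n ≥ 3 be an even natural number and let ζ = exp(2πi/3) ∈ ℂ. The set of triples (x,y,z) of nonzero complex numbers satisfying the leading term equations y² = 1, x²·yⁿ = z, and z² = x·y is exactly the six-element set {(1,1,1), (ζ,1,ζ²), (ζ²,1,ζ), (−1,−1,1), (−ζ²,−1,ζ), (−ζ,−1,ζ²)}. -/
/-!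
Since `y = ±1` and `n` is even, `yⁿ = 1`, so the second equation says `z = x²` and the third
becomes `x⁴ = x y`, i.e. `x³ = y` for `x ≠ 0`. Hence `x` is a cube root of `1` or of `-1`,
which are `1, ζ, ζ²` and their negatives, and `z = x²`.
-/

open Complex

theorem IsPrimitiveRoot.pow_three_eq_one_iff {R : Type*} [CommRing R] [IsDomain R] {ω x : R}
    (hω : IsPrimitiveRoot ω 3) : x ^ 3 = 1 ↔ x = 1 ∨ x = ω ∨ x = ω ^ 2 := by
  constructor
  · intro hx
    obtain ⟨i, hi, rfl⟩ := hω.eq_pow_of_pow_eq_one hx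
    interval_cases i <;> simp
  · rintro (rfl | rfl | rfl)
    · exact one_pow 3
    · exact hω.pow_eq_one
    · rw [← pow_mul, mul_comm, pow_mul, hω.pow_eq_one, one_pow]

theorem IsPrimitiveRoot.pow_three_eq_neg_one_iff {R : Type*} [CommRing R] [IsDomain R]
    {ω x : R} (hω : IsPrimitiveRoot ω 3) : x ^ 3 = -1 ↔ x = -1 ∨ x = -ω ∨ x = -ω ^ 2 := by
  rw [← neg_eq_iff_eq_neg, ← Odd.neg_pow (by decide), hω.pow_three_eq_one_iff]
  simp only [neg_eq_iff_eq_neg]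

theorem leadingTerm_iff {R : Type*} [CommRing R] [IsDomain R] {n : ℕ} (hn : Even n)
    {x y z : R} :
    (x ≠ 0 ∧ y ≠ 0 ∧ z ≠ 0 ∧ y ^ 2 = 1 ∧ x ^ 2 * y ^ n = z ∧ z ^ 2 = x * y) ↔
      (y = 1 ∨ y = -1) ∧ x ^ 3 = y ∧ z = x ^ 2 := by
  obtain ⟨k, rfl⟩ := hn
  have hyn_eq_one : y ^ 2 = 1 → y ^ (k + k) = 1 := fun hy => by rw [← two_mul, pow_mul, hy, one_pow]
  constructor
  · rintro ⟨hx, -, -, hy, rfl, hxy⟩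
    rw [hyn_eq_one hy, mul_one] at hxy ⊢
    refine ⟨sq_eq_one_iff.1 hy, mul_left_cancel₀ hx ?_, rfl⟩
    linear_combination hxy
  · rintro ⟨hy, hx, rfl⟩
    have hy2 : y ^ 2 = 1 := sq_eq_one_iff.2 hy
    have hy0 : y ≠ 0 := by rintro rfl; simp at hy2
    have hx0 : x ≠ 0 := by rintro rfl; exact hy0 (by simpa using hx.symm)
    refine ⟨hx0, hy0, pow_ne_zero 2 hx0, hy2, by rw [hyn_eq_one hy2, mul_one], ?_⟩
    linear_combination x * hx

theorem stmt_9_general (n : ℕ) (heven : Even n) :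
    let ζ : ℂ := Complex.exp (2 * Real.pi * Complex.I / 3)
    {p : ℂ × ℂ × ℂ | p.1 ≠ 0 ∧ p.2.1 ≠ 0 ∧ p.2.2 ≠ 0 ∧
        p.2.1 ^ 2 = 1 ∧ p.1 ^ 2 * p.2.1 ^ n = p.2.2 ∧ p.2.2 ^ 2 = p.1 * p.2.1} =
      {(1, 1, 1), (ζ, 1, ζ ^ 2), (ζ ^ 2, 1, ζ),
        (-1, -1, 1), (-ζ ^ 2, -1, ζ), (-ζ, -1, ζ ^ 2)} := by
  intro ζ
  have hζ : IsPrimitiveRoot ζ 3 := by simpa using Complex.isPrimitiveRoot_exp 3 (by norm_num)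
  have hζ4 : (ζ ^ 2) ^ 2 = ζ := by
    rw [← pow_mul, show 2 * 2 = 3 + 1 by rfl, pow_succ, hζ.pow_eq_one, one_mul]
  ext ⟨x, y, z⟩
  simp only [Set.mem_ofPred_eq, leadingTerm_iff heven, Set.mem_insert_iff, Set.mem_singleton_iff,
    Prod.mk.injEq]
  constructor
  · rintro ⟨rfl | rfl, hx, rfl⟩
    · rcases hζ.pow_three_eq_one_iff.1 hx with rfl | rfl | rfl <;> simp [hζ4]
    · rcases hζ.pow_three_eq_neg_one_iff.1 hx with rfl | rfl | rfl <;> simp [hζ4]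
  · rintro (⟨rfl, rfl, rfl⟩ | ⟨rfl, rfl, rfl⟩ | ⟨rfl, rfl, rfl⟩ | ⟨rfl, rfl, rfl⟩ |
      ⟨rfl, rfl, rfl⟩ | ⟨rfl, rfl, rfl⟩) <;>
    simp [hζ4, hζ.pow_three_eq_one_iff, hζ.pow_three_eq_neg_one_iff]

/-- solutions of the leading term equations for even `n ≥ 3`. -/
theorem stmt_9 (n : ℕ) (hn : 3 ≤ n) (heven : Even n) :
    let ζ : ℂ := Complex.exp (2 * Real.pi * Complex.I / 3)
    {p : ℂ × ℂ × ℂ | p.1 ≠ 0 ∧ p.2.1 ≠ 0 ∧ p.2.2 ≠ 0 ∧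
        p.2.1 ^ 2 = 1 ∧ p.1 ^ 2 * p.2.1 ^ n = p.2.2 ∧ p.2.2 ^ 2 = p.1 * p.2.1} =
      {(1, 1, 1), (ζ, 1, ζ ^ 2), (ζ ^ 2, 1, ζ),
        (-1, -1, 1), (-ζ ^ 2, -1, ζ), (-ζ, -1, ζ ^ 2)} :=
  stmt_9_general n heven
end

section
/- Let n ≥ 3 be a natural number. Every triple (x,y,z) of nonzero complex numbers satisfying y² = 1, x²·yⁿ = z, and z² = x·y also satisfies x² ≠ 4z; equivalently, the stage-two Hessian determinant 4·x⁻²·z⁻³ − z⁻⁴ is nonzero at every solution of the leading term equations. -/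
/-- the stage-two Hessian determinant is nonzero at every solution of
the leading term equations. -/
theorem stmt_10 (n : ℕ) (hn : 3 ≤ n) (x y z : ℂ)
    (hx : x ≠ 0) (hy : y ≠ 0) (hz : z ≠ 0)
    (h1 : y ^ 2 = 1) (h2 : x ^ 2 * y ^ n = z) (h3 : z ^ 2 = x * y) :
    x ^ 2 ≠ 4 * z ∧ 4 * (x ^ 2)⁻¹ * (z ^ 3)⁻¹ - (z ^ 4)⁻¹ ≠ 0 := by
  have hyn : (y ^ n) ^ 2 = 1 := by
    rw [← pow_mul, mul_comm, pow_mul, h1, one_pow]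
  have hmain : x ^ 2 ≠ 4 * z := by
    intro h
    rw [← h2] at h
    have hx2 : (x : ℂ) ^ 2 ≠ 0 := pow_ne_zero _ hx
    have hy4 : y ^ n = 1 / 4 := by
      have := mul_left_cancel₀ hx2 (by linear_combination h : x ^ 2 * 1 = x ^ 2 * (4 * y ^ n))
      linear_combination (-1/4 : ℂ) * this
    rw [hy4] at hyn
    norm_num at hyn
  refine ⟨hmain, ?_⟩
  have hx2 : (x : ℂ) ^ 2 ≠ 0 := pow_ne_zero _ hx
  have hz3 : (z : ℂ) ^ 3 ≠ 0 := pow_ne_zero _ hz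
  have hz4 : (z : ℂ) ^ 4 ≠ 0 := pow_ne_zero _ hz
  intro h
  apply hmain
  field_simp at h
  exact mul_right_cancel₀ hz3 (by linear_combination (-z ^ 3) * h)
end

section
/- The set of triples (x,y,z) of nonzero complex numbers satisfying the system z⁻¹ + 1 = 0, −(z+1)·y⁻² = 0, and y⁻¹ − x·z⁻² = 0 is exactly {(x, x⁻¹, −1) : x ∈ ℂ, x ≠ 0}; moreover, for every such solution the Hessian matrix [[0, 0, −z⁻²], [0, 2(z+1)y⁻³, −y⁻²], [−z⁻², −y⁻², 2x·z⁻³]] has determinant 0, i.e., every solution is a degenerate critical point. -/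
theorem eq_neg_one_of_inv_add_one_eq_zero {K : Type*} [DivisionRing K] {z : K}
    (h : z⁻¹ + 1 = 0) : z = -1 := by
  rw [← inv_inv z, eq_neg_of_add_eq_zero_left h, inv_neg, inv_one]

theorem leadingTermEqs_iff {K : Type*} [Field K] {x y z : K} :
    (z⁻¹ + 1 = 0 ∧ -((z + 1) * (y ^ 2)⁻¹) = 0 ∧ y⁻¹ - x * (z ^ 2)⁻¹ = 0) ↔
      y = x⁻¹ ∧ z = -1 := by
  constructor
  · rintro ⟨hz, -, hy⟩
    obtain rfl := eq_neg_one_of_inv_add_one_eq_zero hz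
    refine ⟨?_, rfl⟩
    have hy : y⁻¹ = x := by simpa [sub_eq_zero] using hy
    rw [← inv_inv y, hy]
  · rintro ⟨rfl, rfl⟩
    norm_num

theorem Matrix.det_fin_three_of_zero_corner {R : Type*} [CommRing R] (a b c d : R) :
    Matrix.det !![0, 0, a; 0, b, c; a, c, d] = -(a ^ 2 * b) := by
  rw [Matrix.det_fin_three]
  simp only [Matrix.of_apply, Matrix.cons_val', Matrix.cons_val_zero, Matrix.cons_val_one,
    Matrix.cons_val_two, Matrix.empty_val', Matrix.cons_val_fin_one, Matrix.head_cons,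
    Matrix.tail_cons, Matrix.head_fin_const]
  ring

/-- the Case (b)(i) leading term equations have solution set
`{(x, x⁻¹, −1) : x ≠ 0}`, and every solution is a degenerate critical point. -/
theorem stmt_11 :
    ({p : ℂ × ℂ × ℂ | p.1 ≠ 0 ∧ p.2.1 ≠ 0 ∧ p.2.2 ≠ 0 ∧
        p.2.2⁻¹ + 1 = 0 ∧ -((p.2.2 + 1) * (p.2.1 ^ 2)⁻¹) = 0 ∧
        p.2.1⁻¹ - p.1 * (p.2.2 ^ 2)⁻¹ = 0} =
      {p : ℂ × ℂ × ℂ | ∃ x : ℂ, x ≠ 0 ∧ p = (x, x⁻¹, -1)}) ∧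
    ∀ x y z : ℂ, x ≠ 0 → y ≠ 0 → z ≠ 0 →
      z⁻¹ + 1 = 0 → -((z + 1) * (y ^ 2)⁻¹) = 0 → y⁻¹ - x * (z ^ 2)⁻¹ = 0 →
      Matrix.det !![0, 0, -(z ^ 2)⁻¹;
                    0, 2 * (z + 1) * (y ^ 3)⁻¹, -(y ^ 2)⁻¹;
                    -(z ^ 2)⁻¹, -(y ^ 2)⁻¹, 2 * x * (z ^ 3)⁻¹] = 0 := by
  refine ⟨?_, fun x y z _ _ _ hz _ _ => ?_⟩
  · ext ⟨x, y, z⟩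
    simp only [Set.mem_ofPred_eq, leadingTermEqs_iff, Prod.mk.injEq]
    constructor
    · rintro ⟨hx, -, -, rfl, rfl⟩
      exact ⟨x, hx, rfl, rfl, rfl⟩
    · rintro ⟨x, hx, rfl, rfl, rfl⟩
      exact ⟨hx, inv_ne_zero hx, by norm_num, rfl, rfl⟩
  · rw [Matrix.det_fin_three_of_zero_corner, eq_neg_one_of_inv_add_one_eq_zero hz]
    ring
end

section
/- Let k be a field of characteristic ≠ 2, let V be an n-dimensional k-vector space with basis e₁, …, e_n, and let Q be a quadratic form on V for which this basis is orthogonal (the polar form of Q vanishes on distinct basis vectors) and Q(eᵢ) ≠ 0 for all i. Let A = Cl(Q), with ℤ/2ℤ-grading A = A₀ ⊕ A₁ in which ι(V) is odd. For a subset S = {i₁ < ⋯ < i_k} of {1,…,n} let e_S = ι(e_{i₁})⋯ι(e_{i_k}). Let T ⊆ A be the k-linear span of all graded commutators a·b − (−1)^{pq}·b·a with a ∈ A_p, b ∈ A_q, p,q ∈ {0,1}. Then T equals the k-linear span of { e_S : S ⊆ {1,…,n}, S ≠ {1,…,n} }. -/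
open CliffordAlgebra

section aux

variable {k V : Type*} [Field k] [AddCommGroup V] [Module k V]
    {n : ℕ} (b : Module.Basis (Fin n) k V) (Q : QuadraticForm k V)

noncomputable def mon (S : Finset (Fin n)) : CliffordAlgebra Q :=
  ((S.sort (· ≤ ·)).map fun i => CliffordAlgebra.ι Q (b i)).prod

lemma mon_empty : mon b Q ∅ = 1 := by simp [mon]

lemma mon_singleton (i : Fin n) : mon b Q {i} = ι Q (b i) := by
  simp [mon, Finset.sort_singleton]

lemma mon_insert_min {S : Finset (Fin n)} {j : Fin n} (hj : j ∉ S)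
    (h : ∀ x ∈ S, j ≤ x) :
    mon b Q (insert j S) = ι Q (b j) * mon b Q S := by
  unfold mon
  rw [Finset.sort_insert (r := (· ≤ ·)) h hj]
  simp

lemma mon_min_erase {S : Finset (Fin n)} (hS : S.Nonempty) :
    mon b Q S = ι Q (b (S.min' hS)) * mon b Q (S.erase (S.min' hS)) := by
  conv_lhs => rw [← Finset.insert_erase (S.min'_mem hS)]
  exact mon_insert_min b Q (Finset.notMem_erase _ _)
    (fun x hx => S.min'_le x (Finset.mem_of_mem_erase hx))

lemma anticomm (horth : ∀ i j, i ≠ j → Q (b i + b j) = Q (b i) + Q (b j)) {i j : Fin n}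
    (h : i ≠ j) :
    ι Q (b i) * ι Q (b j) = -(ι Q (b j) * ι Q (b i)) :=
  ι_mul_ι_comm_of_isOrtho (QuadraticMap.isOrtho_def.mpr (horth i j h))

lemma anticomm_mon (horth : ∀ i j, i ≠ j → Q (b i + b j) = Q (b i) + Q (b j)) :
    ∀ (N : ℕ) (S : Finset (Fin n)), S.card = N → ∀ i ∉ S,
      ι Q (b i) * mon b Q S = ((-1 : k) ^ S.card) • (mon b Q S * ι Q (b i)) := by
  intro N
  induction N with
  | zero =>
    intro S hS i _
    rw [Finset.card_eq_zero.mp hS]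
    simp [mon_empty]
  | succ m ih =>
    intro S hS i hi
    have hne : S.Nonempty := Finset.card_pos.mp (by omega)
    set j := S.min' hne with hj
    have hij : i ≠ j := fun h => hi (h ▸ S.min'_mem hne)
    have hcard : (S.erase j).card = m := by
      rw [Finset.card_erase_of_mem (S.min'_mem hne)]; omega
    have hie : i ∉ S.erase j := fun h => hi (Finset.mem_of_mem_erase h)
    rw [mon_min_erase b Q hne, ← hj, ← mul_assoc, anticomm b Q horth hij, neg_mul,
      mul_assoc, ih _ hcard i hie, hcard]
    rw [hS, mul_smul_comm, ← mul_assoc, pow_succ]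
    module

end aux

section aux2
variable {k V : Type*} [Field k] [AddCommGroup V] [Module k V]
    {n : ℕ} (b : Module.Basis (Fin n) k V) (Q : QuadraticForm k V)

lemma sd_of_not_mem {i : Fin n} {S : Finset (Fin n)} (h : i ∉ S) :
    symmDiff {i} S = insert i S := by
  ext x
  by_cases hx : x = i <;> simp [Finset.mem_symmDiff, hx, h]

lemma sd_of_mem {i : Fin n} {S : Finset (Fin n)} (h : i ∈ S) :
    symmDiff {i} S = S.erase i := by
  ext x
  by_cases hx : x = i <;> simp [Finset.mem_symmDiff, hx, h]

lemma mul_mon (horth : ∀ i j, i ≠ j → Q (b i + b j) = Q (b i) + Q (b j)) :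
    ∀ (N : ℕ) (S : Finset (Fin n)), S.card = N → ∀ i, ∃ c : k,
      ι Q (b i) * mon b Q S = c • mon b Q (symmDiff {i} S) := by
  intro N
  induction N with
  | zero =>
    intro S hS i
    rw [Finset.card_eq_zero.mp hS]
    refine ⟨1, ?_⟩
    rw [sd_of_not_mem (Finset.notMem_empty i), Finset.insert_empty]
    simp [mon_singleton, mon_empty]
  | succ m ih =>
    intro S hS i
    have hne : S.Nonempty := Finset.card_pos.mp (by omega)
    set j := S.min' hne with hj
    have hjS : j ∈ S := S.min'_mem hne
    rcases lt_trichotomy i j with hlt | heq | hgt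
    · have hiS : i ∉ S := fun h => absurd (S.min'_le i h) (not_le.mpr hlt)
      refine ⟨1, ?_⟩
      rw [sd_of_not_mem hiS, one_smul,
        mon_insert_min b Q hiS (fun x hx => le_of_lt (lt_of_lt_of_le hlt (S.min'_le x hx)))]
    · have hiS : i ∈ S := heq ▸ hjS
      refine ⟨Q (b i), ?_⟩
      rw [mon_min_erase b Q hne, ← hj, ← heq, ← mul_assoc, ι_sq_scalar, sd_of_mem hiS,
        Algebra.smul_def]
    · have hij : i ≠ j := ne_of_gt hgt
      have hcard : (S.erase j).card = m := by
        rw [Finset.card_erase_of_mem hjS]; omega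
      obtain ⟨c, hc⟩ := ih (S.erase j) hcard i
      refine ⟨-c, ?_⟩
      have hjU : j ∉ symmDiff {i} (S.erase j) := by
        simp [Finset.mem_symmDiff, hij.symm]
      have hle : ∀ x ∈ symmDiff {i} (S.erase j), j ≤ x := by
        intro x hx
        rw [Finset.mem_symmDiff] at hx
        rcases hx with ⟨hx, -⟩ | ⟨hx, -⟩
        · rw [Finset.mem_singleton] at hx
          exact hx ▸ hgt.le
        · exact S.min'_le x (Finset.mem_of_mem_erase hx)
      have hU : insert j (symmDiff {i} (S.erase j)) = symmDiff {i} S := by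
        ext x
        rcases eq_or_ne x j with rfl | hxj
        · simp [Finset.mem_symmDiff, Finset.mem_erase, hjS, hij.symm]
        · simp only [Finset.mem_insert, Finset.mem_symmDiff, Finset.mem_singleton,
            Finset.mem_erase, hxj, false_or]
          tauto
      rw [mon_min_erase b Q hne, ← hj, ← mul_assoc, anticomm b Q horth hij, neg_mul,
        mul_assoc, hc, mul_smul_comm, ← mon_insert_min b Q hjU hle, hU, neg_smul]

end aux2

section aux3
variable {k V : Type*} [Field k] [AddCommGroup V] [Module k V]
    {n : ℕ} (b : Module.Basis (Fin n) k V) (Q : QuadraticForm k V)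

lemma mon_mul_mon (horth : ∀ i j, i ≠ j → Q (b i + b j) = Q (b i) + Q (b j)) :
    ∀ (N : ℕ) (S T : Finset (Fin n)), S.card = N → ∃ c : k,
      mon b Q S * mon b Q T = c • mon b Q (symmDiff S T) := by
  intro N
  induction N with
  | zero =>
    intro S T hS
    rw [Finset.card_eq_zero.mp hS]
    refine ⟨1, ?_⟩
    have : symmDiff (∅ : Finset (Fin n)) T = T := by
      ext x; simp [Finset.mem_symmDiff]
    rw [this, mon_empty, one_mul, one_smul]
  | succ m ih =>
    intro S T hS
    have hne : S.Nonempty := Finset.card_pos.mp (by omega)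
    set j := S.min' hne with hj
    have hjS : j ∈ S := S.min'_mem hne
    have hcard : (S.erase j).card = m := by
      rw [Finset.card_erase_of_mem hjS]; omega
    obtain ⟨c, hc⟩ := ih (S.erase j) T hcard
    obtain ⟨c', hc'⟩ := mul_mon b Q horth (symmDiff (S.erase j) T).card _ rfl j
    have hset : symmDiff {j} (symmDiff (S.erase j) T) = symmDiff S T := by
      rw [← symmDiff_assoc, sd_of_not_mem (Finset.notMem_erase j S),
        Finset.insert_erase hjS]
    refine ⟨c * c', ?_⟩
    rw [mon_min_erase b Q hne, ← hj, mul_assoc, hc, mul_smul_comm, hc', hset, smul_smul]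

lemma mon_mul_mon_disjoint (horth : ∀ i j, i ≠ j → Q (b i + b j) = Q (b i) + Q (b j)) :
    ∀ (N : ℕ) (S T : Finset (Fin n)), S.card = N → Disjoint S T →
      mon b Q S * mon b Q T = ((-1 : k) ^ (S.card * T.card)) • (mon b Q T * mon b Q S) := by
  intro N
  induction N with
  | zero =>
    intro S T hS _
    rw [Finset.card_eq_zero.mp hS]
    simp [mon_empty]
  | succ m ih =>
    intro S T hS hd
    have hne : S.Nonempty := Finset.card_pos.mp (by omega)
    set j := S.min' hne with hj
    have hjS : j ∈ S := S.min'_mem hne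
    have hcard : (S.erase j).card = m := by
      rw [Finset.card_erase_of_mem hjS]; omega
    have hjT : j ∉ T := fun h => (Finset.disjoint_left.mp hd hjS) h
    have ihd : Disjoint (S.erase j) T := Finset.disjoint_of_subset_left (Finset.erase_subset _ _) hd
    rw [mon_min_erase b Q hne, ← hj, mul_assoc, ih _ T hcard ihd, hcard,
      mul_smul_comm, ← mul_assoc, anticomm_mon b Q horth T.card T rfl j hjT,
      smul_mul_assoc, smul_smul, ← pow_add, mul_assoc, ← mon_min_erase b Q hne, hS,
      show m * T.card + T.card = (m + 1) * T.card from by ring]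

lemma mon_mem_pow : ∀ (N : ℕ) (S : Finset (Fin n)), S.card = N →
    mon b Q S ∈ LinearMap.range (ι Q) ^ S.card := by
  intro N
  induction N with
  | zero =>
    intro S hS
    rw [Finset.card_eq_zero.mp hS]
    rw [mon_empty, Finset.card_empty, pow_zero]
    exact Submodule.one_le.mp le_rfl
  | succ m ih =>
    intro S hS
    have hne : S.Nonempty := Finset.card_pos.mp (by omega)
    set j := S.min' hne with hj
    have hjS : j ∈ S := S.min'_mem hne
    have hcard : (S.erase j).card = m := by
      rw [Finset.card_erase_of_mem hjS]; omega
    rw [mon_min_erase b Q hne, ← hj, hS, pow_succ']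
    have := ih (S.erase j) hcard
    rw [hcard] at this
    exact Submodule.mul_mem_mul (LinearMap.mem_range_self _ _) this

lemma pow_le_evenOdd (m : ℕ) :
    LinearMap.range (ι Q) ^ m ≤ CliffordAlgebra.evenOdd Q (m : ZMod 2) :=
  le_iSup (fun i : {n : ℕ // (n : ZMod 2) = ((m : ℕ) : ZMod 2)} =>
    LinearMap.range (CliffordAlgebra.ι Q) ^ (i : ℕ)) ⟨m, rfl⟩

lemma card_sd (i : Fin n) (S : Finset (Fin n)) :
    (((symmDiff {i} S).card : ℕ) : ZMod 2) = (S.card : ZMod 2) + 1 := by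
  by_cases h : i ∈ S
  · rw [sd_of_mem h, Finset.card_erase_of_mem h]
    obtain ⟨m, hm⟩ : ∃ m, S.card = m + 1 :=
      ⟨S.card - 1, by have := Finset.card_pos.mpr ⟨i, h⟩; omega⟩
    rw [hm, Nat.add_sub_cancel]
    push_cast
    rw [add_assoc, show (1 + 1 : ZMod 2) = 0 from by decide, add_zero]
  · rw [sd_of_not_mem h, Finset.card_insert_of_notMem h]
    push_cast
    ring

end aux3

section aux4
variable {k V : Type*} [Field k] [AddCommGroup V] [Module k V]
    {n : ℕ} (b : Module.Basis (Fin n) k V) (Q : QuadraticForm k V)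

lemma pow_le_span (horth : ∀ i j, i ≠ j → Q (b i + b j) = Q (b i) + Q (b j)) :
    ∀ m : ℕ, LinearMap.range (ι Q) ^ m ≤ Submodule.span k
      {x | ∃ S : Finset (Fin n), ((S.card : ℕ) : ZMod 2) = (m : ZMod 2) ∧ x = mon b Q S} := by
  intro m
  induction m with
  | zero =>
    rw [pow_zero]
    refine Submodule.one_le.mpr (Submodule.subset_span ⟨∅, by simp, (mon_empty b Q).symm⟩)
  | succ m ih =>
    rw [pow_succ']
    refine Submodule.mul_le.mpr ?_
    rintro x ⟨v, rfl⟩ y hy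
    have hy' := ih hy
    refine Submodule.span_induction (p := fun y _ => ι Q v * y ∈ Submodule.span k
      {x | ∃ S : Finset (Fin n), ((S.card : ℕ) : ZMod 2) = ((m + 1 : ℕ) : ZMod 2) ∧
        x = mon b Q S}) ?_ ?_ ?_ ?_ hy'
    · rintro z ⟨S, hpar, rfl⟩
      have hv : ι Q v = ∑ i, b.repr v i • ι Q (b i) := by
        conv_lhs => rw [← b.sum_repr v]
        rw [map_sum]
        simp
      rw [hv, Finset.sum_mul]
      refine Submodule.sum_mem _ fun i _ => ?_
      rw [smul_mul_assoc]
      refine Submodule.smul_mem _ _ ?_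
      obtain ⟨c, hc⟩ := mul_mon b Q horth S.card S rfl i
      rw [hc]
      refine Submodule.smul_mem _ _ (Submodule.subset_span ⟨symmDiff {i} S, ?_, rfl⟩)
      rw [card_sd, hpar]
      push_cast
      ring
    · show ι Q v * 0 ∈ _
      rw [mul_zero]; exact Submodule.zero_mem _
    · intro x y _ _ hx hy
      show ι Q v * (x + y) ∈ _
      rw [mul_add]; exact Submodule.add_mem _ hx hy
    · intro r x _ hx
      show ι Q v * (r • x) ∈ _
      rw [mul_smul_comm]; exact Submodule.smul_mem _ _ hx

lemma evenOdd_le_span (horth : ∀ i j, i ≠ j → Q (b i + b j) = Q (b i) + Q (b j)) (p : ZMod 2) :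
    CliffordAlgebra.evenOdd Q p ≤ Submodule.span k
      {x | ∃ S : Finset (Fin n), ((S.card : ℕ) : ZMod 2) = p ∧ x = mon b Q S} := by
  refine iSup_le ?_
  rintro ⟨m, rfl⟩
  exact pow_le_span b Q horth m

end aux4



/-- the span of graded commutators in the Clifford algebra of a
nondegenerate diagonal quadratic form equals the span of the proper ordered monomials. -/
theorem stmt_14 {k V : Type*} [Field k] [AddCommGroup V] [Module k V]
    (hchar : (2 : k) ≠ 0) (n : ℕ) (b : Module.Basis (Fin n) k V)
    (Q : QuadraticForm k V)
    (horth : ∀ i j, i ≠ j → Q (b i + b j) = Q (b i) + Q (b j))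
    (hQ : ∀ i, Q (b i) ≠ 0) :
    Submodule.span k {x : CliffordAlgebra Q |
        ∃ (p q : ZMod 2) (a c : CliffordAlgebra Q),
          a ∈ CliffordAlgebra.evenOdd Q p ∧ c ∈ CliffordAlgebra.evenOdd Q q ∧
          x = a * c - ((-1 : k) ^ (p.val * q.val)) • (c * a)} =
      Submodule.span k {x : CliffordAlgebra Q |
        ∃ S : Finset (Fin n), S ≠ Finset.univ ∧
          x = ((S.sort (· ≤ ·)).map fun i => CliffordAlgebra.ι Q (b i)).prod} := by
  classical
  have hgen : ∀ S : Finset (Fin n),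
      ((S.sort (· ≤ ·)).map fun i => CliffordAlgebra.ι Q (b i)).prod = mon b Q S :=
    fun S => rfl
  set RHS := Submodule.span k {x : CliffordAlgebra Q |
      ∃ S : Finset (Fin n), S ≠ Finset.univ ∧
        x = ((S.sort (· ≤ ·)).map fun i => CliffordAlgebra.ι Q (b i)).prod} with hRHS
  apply le_antisymm
  · rw [Submodule.span_le]
    rintro x ⟨p, q, a, c, ha, hc, rfl⟩
    have ha' := evenOdd_le_span b Q horth p ha
    have hc' := evenOdd_le_span b Q horth q hc
    clear ha hc
    refine Submodule.span_induction (p := fun a _ =>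
        ∀ c ∈ Submodule.span k
          {x | ∃ T : Finset (Fin n), ((T.card : ℕ) : ZMod 2) = q ∧ x = mon b Q T},
        a * c - ((-1 : k) ^ (p.val * q.val)) • (c * a) ∈ RHS) ?_ ?_ ?_ ?_ ha' c hc'
    · rintro a ⟨S, hpS, rfl⟩ c hcs
      refine Submodule.span_induction (p := fun c _ =>
          mon b Q S * c - ((-1 : k) ^ (p.val * q.val)) • (c * mon b Q S) ∈ RHS) ?_ ?_ ?_ ?_ hcs
      · rintro c ⟨T, hpT, rfl⟩
        have hsign : ((-1 : k) ^ (p.val * q.val)) = (-1) ^ (S.card * T.card) := by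
          rw [← hpS, ← hpT, ZMod.val_natCast, ZMod.val_natCast,
            neg_one_pow_eq_pow_mod_two, neg_one_pow_eq_pow_mod_two (n := S.card * T.card)]
          congr 1
          conv_rhs => rw [Nat.mul_mod]
        by_cases hU : symmDiff S T = Finset.univ
        · have hdisj : Disjoint S T := by
            rw [Finset.disjoint_left]
            intro x hxS hxT
            have := Finset.mem_symmDiff.mp (hU ▸ Finset.mem_univ x)
            tauto
          rw [hsign, mon_mul_mon_disjoint b Q horth S.card S T rfl hdisj, sub_self]
          exact Submodule.zero_mem _
        · obtain ⟨c₁, hc₁⟩ := mon_mul_mon b Q horth S.card S T rfl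
          obtain ⟨c₂, hc₂⟩ := mon_mul_mon b Q horth T.card T S rfl
          rw [hc₁, hc₂, symmDiff_comm T S]
          exact Submodule.sub_mem _
            (Submodule.smul_mem _ _ (Submodule.subset_span ⟨symmDiff S T, hU, (hgen _).symm⟩))
            (Submodule.smul_mem _ _ (Submodule.smul_mem _ _
              (Submodule.subset_span ⟨symmDiff S T, hU, (hgen _).symm⟩)))
      · show mon b Q S * 0 - _ • (0 * mon b Q S) ∈ RHS
        simp
      · intro x y _ _ hx hy
        show mon b Q S * (x + y) - _ • ((x + y) * mon b Q S) ∈ RHS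
        have := Submodule.add_mem _ hx hy
        convert this using 1
        simp only [mul_add, add_mul, smul_add]
        abel
      · intro r x _ hx
        show mon b Q S * (r • x) - _ • ((r • x) * mon b Q S) ∈ RHS
        have heq : mon b Q S * (r • x) - ((-1 : k) ^ (p.val * q.val)) • ((r • x) * mon b Q S)
            = r • (mon b Q S * x - ((-1 : k) ^ (p.val * q.val)) • (x * mon b Q S)) := by
          rw [mul_smul_comm, smul_mul_assoc, smul_comm ((-1 : k) ^ (p.val * q.val)) r,
            smul_sub]
        rw [heq]
        exact Submodule.smul_mem _ _ hx
    · intro c _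
      show (0 : CliffordAlgebra Q) * c - _ • (c * 0) ∈ RHS
      simp
    · intro x y _ _ hx hy c hcmem
      show (x + y) * c - _ • (c * (x + y)) ∈ RHS
      have := Submodule.add_mem _ (hx c hcmem) (hy c hcmem)
      convert this using 1
      simp only [mul_add, add_mul, smul_add]
      abel
    · intro r x _ hx c hcmem
      show (r • x) * c - _ • (c * (r • x)) ∈ RHS
      have heq : (r • x) * c - ((-1 : k) ^ (p.val * q.val)) • (c * (r • x))
          = r • (x * c - ((-1 : k) ^ (p.val * q.val)) • (c * x)) := by
        rw [mul_smul_comm, smul_mul_assoc, smul_comm ((-1 : k) ^ (p.val * q.val)) r, smul_sub]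
      rw [heq]
      exact Submodule.smul_mem _ _ (hx c hcmem)
  · rw [Submodule.span_le]
    rintro x ⟨S, hSne, rfl⟩
    rw [hgen]
    obtain ⟨i, hi⟩ : ∃ i, i ∉ S := by
      by_contra h
      push_neg at h
      exact hSne (Finset.eq_univ_iff_forall.mpr h)
    have hanti := anticomm_mon b Q horth S.card S rfl i hi
    have hanti' : mon b Q S * ι Q (b i) = ((-1 : k) ^ S.card) • (ι Q (b i) * mon b Q S) := by
      rw [hanti, smul_smul, ← pow_add, Even.neg_one_pow ⟨S.card, rfl⟩, one_smul]
    set a := ι Q (b i) with hA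
    set c := a * mon b Q S with hC
    have ha : a ∈ CliffordAlgebra.evenOdd Q 1 := CliffordAlgebra.ι_mem_evenOdd_one Q (b i)
    have hc : c ∈ CliffordAlgebra.evenOdd Q ((S.card + 1 : ℕ) : ZMod 2) := by
      refine pow_le_evenOdd Q (S.card + 1) ?_
      rw [pow_succ']
      exact Submodule.mul_mem_mul (LinearMap.mem_range_self _ _)
        (mon_mem_pow b Q S.card S rfl)
    have hx : a * c - ((-1 : k) ^ ((1 : ZMod 2).val * ((S.card + 1 : ℕ) : ZMod 2).val)) • (c * a)
        ∈ Submodule.span k {x : CliffordAlgebra Q |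
          ∃ (p q : ZMod 2) (a c : CliffordAlgebra Q),
            a ∈ CliffordAlgebra.evenOdd Q p ∧ c ∈ CliffordAlgebra.evenOdd Q q ∧
            x = a * c - ((-1 : k) ^ (p.val * q.val)) • (c * a)} :=
      Submodule.subset_span ⟨1, ((S.card + 1 : ℕ) : ZMod 2), a, c, ha, hc, rfl⟩
    have hval : ((1 : ZMod 2).val * ((S.card + 1 : ℕ) : ZMod 2).val) = (S.card + 1) % 2 := by
      rw [ZMod.val_natCast, show (1 : ZMod 2).val = 1 from rfl, one_mul]
    have hsq : a * a = algebraMap k (CliffordAlgebra Q) (Q (b i)) := ι_sq_scalar Q (b i)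
    have hac : a * c = Q (b i) • mon b Q S := by
      rw [hC, ← mul_assoc, hsq, Algebra.smul_def]
    have hca : c * a = ((-1 : k) ^ S.card) • (Q (b i) • mon b Q S) := by
      calc c * a = a * (mon b Q S * a) := by rw [hC, mul_assoc]
        _ = a * ((-1 : k) ^ S.card • c) := by rw [hanti']
        _ = (-1 : k) ^ S.card • (a * (a * mon b Q S)) := by rw [mul_smul_comm, hC]
        _ = (-1 : k) ^ S.card • (Q (b i) • mon b Q S) := by
            rw [← mul_assoc, hsq, ← Algebra.smul_def]
    have hkey : a * c - ((-1 : k) ^ ((1 : ZMod 2).val * ((S.card + 1 : ℕ) : ZMod 2).val)) • (c * a)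
        = (2 * Q (b i)) • mon b Q S := by
      rw [hac, hca, hval, ← neg_one_pow_eq_pow_mod_two, smul_smul, smul_smul, ← pow_add]
      have hodd : (-1 : k) ^ (S.card + 1 + S.card) = -1 :=
        Odd.neg_one_pow ⟨S.card, by ring⟩
      rw [hodd]
      rw [← sub_smul]
      congr 1
      ring
    have h2Q : (2 * Q (b i)) ≠ 0 := mul_ne_zero hchar (hQ i)
    have : mon b Q S = (2 * Q (b i))⁻¹ • (a * c -
        ((-1 : k) ^ ((1 : ZMod 2).val * ((S.card + 1 : ℕ) : ZMod 2).val)) • (c * a)) := by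
      rw [hkey, smul_smul, inv_mul_cancel₀ h2Q, one_smul]
    rw [this]
    exact Submodule.smul_mem _ _ hx
end

section
/- Let k be a field of characteristic ≠ 2, let V be an n-dimensional k-vector space with basis e₁, …, e_n, and let Q be a quadratic form on V for which this basis is orthogonal and Q(eᵢ) ≠ 0 for all i. Let A = Cl(Q) with its ℤ/2ℤ-grading, and let T ⊆ A be the k-linear span of all graded commutators a·b − (−1)^{pq}·b·a with a homogeneous of degree p and b homogeneous of degree q. Then the quotient vector space A/T is one-dimensional over k, spanned by the image of the product ι(e₁)⋯ι(e_n). -/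
open CliffordAlgebra

namespace Stmt15

lemma sgn_eq {k : Type*} [Field k] {a c : ℕ} (h : a % 2 = c % 2) :
    ((-1 : k) ^ a = (-1 : k) ^ c) := by
  rw [neg_one_pow_eq_pow_mod_two, h, ← neg_one_pow_eq_pow_mod_two]

variable {k V : Type*} [Field k] [AddCommGroup V] [Module k V]
  {n : ℕ} (b : Module.Basis (Fin n) k V) (Q : QuadraticForm k V)

noncomputable def eL (l : List (Fin n)) : CliffordAlgebra Q :=
  (l.map fun i => CliffordAlgebra.ι Q (b i)).prod

@[simp] lemma eL_nil : eL b Q [] = 1 := rfl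

@[simp] lemma eL_cons (i : Fin n) (l : List (Fin n)) :
    eL b Q (i :: l) = CliffordAlgebra.ι Q (b i) * eL b Q l := by
  simp [eL]

@[simp] lemma eL_append (l₁ l₂ : List (Fin n)) :
    eL b Q (l₁ ++ l₂) = eL b Q l₁ * eL b Q l₂ := by
  simp [eL]

variable (horth : ∀ i j : Fin n, i ≠ j → Q (b i + b j) = Q (b i) + Q (b j))

section
include horth

lemma hanti {i j : Fin n} (h : i ≠ j) :
    ι Q (b i) * ι Q (b j) = -(ι Q (b j) * ι Q (b i)) :=
  ι_mul_ι_comm_of_isOrtho (QuadraticMap.isOrtho_def.mpr (horth i j h))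

/-- one-step move of a basis generator across a list monomial -/
lemma move (i : Fin n) (l : List (Fin n)) :
    ι Q (b i) * eL b Q l
      = ((-1 : k) ^ (l.length + l.count i)) • (eL b Q l * ι Q (b i)) := by
  induction l with
  | nil => simp
  | cons j t ih =>
    have ih' : eL b Q t * ι Q (b i)
        = ((-1 : k) ^ (t.length + t.count i)) • (ι Q (b i) * eL b Q t) := by
      rw [ih, smul_smul, ← pow_add, ← two_mul, pow_mul, neg_one_sq, one_pow, one_smul]
    rcases eq_or_ne i j with rfl | hij
    · rw [eL_cons, mul_assoc, ih', ← mul_assoc, mul_smul_comm, smul_smul, ← pow_add]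
      have h2 : (t.length + t.count i + (i :: t).length + List.count i (i :: t)) % 2 = 0 := by
        simp only [List.length_cons, List.count_cons_self]; omega
      rw [show ((i :: t).length + List.count i (i :: t)) + (t.length + t.count i)
            = t.length + t.count i + (i :: t).length + List.count i (i :: t) by ring,
        ← mul_assoc]
      have h3 := sgn_eq (k := k) (a := t.length + t.count i + (i :: t).length
        + List.count i (i :: t)) (c := 0) (by omega)
      rw [h3, pow_zero, one_smul]
    · rw [eL_cons, ← mul_assoc, hanti b Q horth hij, neg_mul, mul_assoc, ih,
        mul_smul_comm, mul_assoc, ← neg_smul]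
      congr 1
      rw [show -(-1 : k) ^ (t.length + t.count i) = (-1 : k) ^ (t.length + t.count i + 1) by
        rw [pow_succ]; ring]
      apply sgn_eq
      rw [List.length_cons, List.count_cons_of_ne hij.symm]
      omega

@[simp] lemma eL_singleton (i : Fin n) : eL b Q [i] = ι Q (b i) := by
  simp [eL]

end

def kap (l₁ l₂ : List (Fin n)) : ℕ := (l₁.map fun a => l₂.count a).sum

@[simp] lemma kap_nil (l₂ : List (Fin n)) : kap ([] : List (Fin n)) l₂ = 0 := rfl

lemma kap_cons (a : Fin n) (t l₂ : List (Fin n)) :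
    kap (a :: t) l₂ = l₂.count a + kap t l₂ := by simp [kap]

lemma kap_concat (t l₂ : List (Fin n)) (i : Fin n) :
    kap t (l₂ ++ [i]) = kap t l₂ + t.count i := by
  induction t with
  | nil => simp
  | cons a t ih =>
    rw [kap_cons, kap_cons, ih, List.count_append]
    rcases eq_or_ne i a with rfl | h
    · simp [List.count_cons]; omega
    · simp [List.count_cons, h, Ne.symm h]; omega

section
include horth

lemma rot (l₁ l₂ : List (Fin n)) :
    eL b Q (l₁ ++ l₂)
      = ((-1 : k) ^ (l₁.length * l₂.length + kap l₁ l₂)) • eL b Q (l₂ ++ l₁) := by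
  induction l₁ generalizing l₂ with
  | nil => simp [kap]
  | cons i t ih =>
    have h1 : eL b Q ((i :: t) ++ l₂) = ι Q (b i) * eL b Q (t ++ l₂) := by simp
    have h2 : eL b Q (t ++ l₂) * ι Q (b i) = eL b Q (t ++ (l₂ ++ [i])) := by simp [mul_assoc]
    rw [h1, move b Q horth, h2, ih (l₂ ++ [i]), smul_smul, ← pow_add]
    have h3 : (l₂ ++ [i]) ++ t = l₂ ++ (i :: t) := by simp
    rw [h3]
    congr 1
    apply sgn_eq
    rw [List.length_append, List.count_append, kap_concat, List.length_cons,
      List.length_append, List.length_singleton, kap_cons]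
    rw [Nat.mul_succ, Nat.succ_mul]
    omega

lemma perm_eL {l₁ l₂ : List (Fin n)} (h : l₁.Perm l₂) :
    ∃ c : k, eL b Q l₁ = c • eL b Q l₂ := by
  induction h with
  | nil => exact ⟨1, by simp⟩
  | cons x h ih =>
    obtain ⟨c, hc⟩ := ih
    exact ⟨c, by simp [hc, mul_smul_comm]⟩
  | swap x y l =>
    rcases eq_or_ne y x with rfl | hyx
    · exact ⟨1, by simp⟩
    · refine ⟨-1, ?_⟩
      simp only [eL_cons, ← mul_assoc, hanti b Q horth hyx]
      simp
  | trans h₁ h₂ ih₁ ih₂ =>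
    obtain ⟨c₁, hc₁⟩ := ih₁
    obtain ⟨c₂, hc₂⟩ := ih₂
    exact ⟨c₁ * c₂, by rw [hc₁, hc₂, smul_smul]⟩

end

lemma eL_mem (l : List (Fin n)) :
    eL b Q l ∈ CliffordAlgebra.evenOdd Q (l.length : ZMod 2) := by
  induction l with
  | nil => simpa using SetLike.one_mem_graded (CliffordAlgebra.evenOdd Q)
  | cons i t ih =>
    have : ((t.length + 1 : ℕ) : ZMod 2) = 1 + (t.length : ZMod 2) := by push_cast; ring
    rw [List.length_cons, this, eL_cons]
    exact SetLike.mul_mem_graded (CliffordAlgebra.ι_mem_evenOdd_one Q (b i)) ih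

lemma span_eL_top :
    Submodule.span k {x : CliffordAlgebra Q | ∃ l : List (Fin n), x = eL b Q l} = ⊤ := by
  set S : Set (CliffordAlgebra Q) := {x | ∃ l : List (Fin n), x = eL b Q l} with hS
  have hmulbasis : ∀ (i : Fin n) (x : CliffordAlgebra Q), x ∈ Submodule.span k S →
      ι Q (b i) * x ∈ Submodule.span k S := by
    intro i x hx
    induction hx using Submodule.span_induction with
    | mem y hy =>
      obtain ⟨l, rfl⟩ := hy
      exact Submodule.subset_span ⟨i :: l, (eL_cons b Q i l).symm⟩
    | zero => simp
    | add y z _ _ hy hz => rw [mul_add]; exact Submodule.add_mem _ hy hz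
    | smul c y _ hy => rw [mul_smul_comm]; exact Submodule.smul_mem _ _ hy
  have hmulι : ∀ (v : V) (x : CliffordAlgebra Q), x ∈ Submodule.span k S →
      ι Q v * x ∈ Submodule.span k S := by
    intro v x hx
    have hv : ι Q v = ∑ i, b.repr v i • ι Q (b i) := by
      conv_lhs => rw [← b.sum_repr v]
      rw [map_sum]
      simp
    rw [hv, Finset.sum_mul]
    refine Submodule.sum_mem _ fun i _ => ?_
    rw [smul_mul_assoc]
    exact Submodule.smul_mem _ _ (hmulbasis i x hx)
  rw [eq_top_iff]
  rintro x -
  induction x using CliffordAlgebra.induction with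
  | algebraMap r =>
    rw [Algebra.algebraMap_eq_smul_one]
    exact Submodule.smul_mem _ _ (Submodule.subset_span ⟨[], rfl⟩)
  | ι v =>
    have := hmulι v 1 (Submodule.subset_span ⟨[], rfl⟩)
    simpa using this
  | mul a c ha hc =>
    induction ha using Submodule.span_induction with
    | mem y hy =>
      obtain ⟨l, rfl⟩ := hy
      induction l with
      | nil => simpa using hc
      | cons j t iht =>
        rw [eL_cons, mul_assoc]
        exact hmulbasis j _ iht
    | zero => simp
    | add y z _ _ hy hz => rw [add_mul]; exact Submodule.add_mem _ hy hz
    | smul r y _ hy => rw [smul_mul_assoc]; exact Submodule.smul_mem _ _ hy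
  | add a c ha hc => exact Submodule.add_mem _ ha hc

lemma pow_le_span (m : ℕ) :
    (LinearMap.range (ι Q)) ^ m
      ≤ Submodule.span k {x : CliffordAlgebra Q | ∃ l : List (Fin n), l.length = m ∧ x = eL b Q l} := by
  induction m with
  | zero =>
    rw [pow_zero, Submodule.one_eq_span]
    exact Submodule.span_mono (by rintro x rfl; exact ⟨[], rfl, rfl⟩)
  | succ m ih =>
    rw [pow_succ]
    rw [Submodule.mul_le]
    intro x hx y hy
    obtain ⟨v, rfl⟩ := hy
    have hx' := ih hx
    have hv : ι Q v = ∑ i, b.repr v i • ι Q (b i) := by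
      conv_lhs => rw [← b.sum_repr v]
      rw [map_sum]
      simp
    clear hx
    induction hx' using Submodule.span_induction with
    | mem z hz =>
      obtain ⟨l, hl, rfl⟩ := hz
      rw [hv, Finset.mul_sum]
      refine Submodule.sum_mem _ fun i _ => ?_
      rw [mul_smul_comm]
      refine Submodule.smul_mem _ _ (Submodule.subset_span ⟨l ++ [i], ?_, by simp⟩)
      simp [hl]
    | zero => simp
    | add y z _ _ hy hz => rw [add_mul]; exact Submodule.add_mem _ hy hz
    | smul c z _ hz => rw [smul_mul_assoc]; exact Submodule.smul_mem _ _ hz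

lemma evenOdd_le_span (p : ZMod 2) :
    CliffordAlgebra.evenOdd Q p
      ≤ Submodule.span k {x : CliffordAlgebra Q |
          ∃ l : List (Fin n), (l.length : ZMod 2) = p ∧ x = eL b Q l} := by
  rw [CliffordAlgebra.evenOdd]
  refine iSup_le fun i => ?_
  refine le_trans (pow_le_span b Q (i : ℕ)) (Submodule.span_mono ?_)
  rintro x ⟨l, hl, rfl⟩
  exact ⟨l, by rw [hl]; exact i.2, rfl⟩

/-! ### Fock representation -/

def cnt (i : Fin n) (S : Finset (Fin n)) : ℕ := (S.filter (fun j => j < i)).card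

def sg (i : Fin n) (S : Finset (Fin n)) : k := (-1) ^ (cnt i S)

lemma sg_mul_self (i : Fin n) (S : Finset (Fin n)) : (sg i S : k) * sg i S = 1 := by
  rw [sg, ← pow_add, ← two_mul, pow_mul, neg_one_sq, one_pow]

lemma cnt_erase_of_not_lt {i j : Fin n} (h : ¬ j < i) (S : Finset (Fin n)) :
    cnt i (S.erase j) = cnt i S := by
  have hj : j ∉ S.filter (fun x => x < i) := fun hmem => h (Finset.mem_filter.mp hmem).2
  rw [cnt, Finset.filter_erase, Finset.erase_eq_of_notMem hj, cnt]

lemma cnt_insert_of_not_lt {i j : Fin n} (h : ¬ j < i) (S : Finset (Fin n)) :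
    cnt i (insert j S) = cnt i S := by
  rw [cnt, Finset.filter_insert, if_neg h, cnt]

lemma cnt_erase_of_lt {i j : Fin n} (h : i < j) {S : Finset (Fin n)} (hi : i ∈ S) :
    cnt j (S.erase i) + 1 = cnt j S := by
  rw [cnt, Finset.filter_erase, cnt]
  exact Finset.card_erase_add_one (Finset.mem_filter.mpr ⟨hi, h⟩)

lemma cnt_insert_of_lt {i j : Fin n} (h : i < j) {S : Finset (Fin n)} (hi : i ∉ S) :
    cnt j (insert i S) = cnt j S + 1 := by
  rw [cnt, Finset.filter_insert, if_pos h,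
    Finset.card_insert_of_notMem (fun hmem => hi (Finset.mem_filter.mp hmem).1), cnt]

lemma sg_erase_of_not_lt {i j : Fin n} (h : ¬ j < i) (S : Finset (Fin n)) :
    (sg i (S.erase j) : k) = sg i S := by rw [sg, cnt_erase_of_not_lt h, sg]

lemma sg_insert_of_not_lt {i j : Fin n} (h : ¬ j < i) (S : Finset (Fin n)) :
    (sg i (insert j S) : k) = sg i S := by rw [sg, cnt_insert_of_not_lt h, sg]

lemma sg_erase_of_lt {i j : Fin n} (h : i < j) {S : Finset (Fin n)} (hi : i ∈ S) :
    (sg j (S.erase i) : k) = -sg j S := by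
  rw [sg, sg, ← cnt_erase_of_lt h hi, pow_succ]
  ring

lemma sg_insert_of_lt {i j : Fin n} (h : i < j) {S : Finset (Fin n)} (hi : i ∉ S) :
    (sg j (insert i S) : k) = -sg j S := by
  rw [sg, sg, cnt_insert_of_lt h hi, pow_succ]
  ring

noncomputable def psi (i : Fin n) :
    (Finset (Fin n) →₀ k) →ₗ[k] (Finset (Fin n) →₀ k) :=
  Finsupp.lift _ k _ fun S =>
    if i ∈ S then (sg i S * Q (b i)) • Finsupp.single (S.erase i) (1 : k)
    else (sg i S : k) • Finsupp.single (insert i S) (1 : k)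

lemma psi_single (i : Fin n) (S : Finset (Fin n)) :
    psi b Q i (Finsupp.single S 1)
      = if i ∈ S then (sg i S * Q (b i)) • Finsupp.single (S.erase i) (1 : k)
        else (sg i S : k) • Finsupp.single (insert i S) (1 : k) := by
  rw [psi, Finsupp.lift_apply, Finsupp.sum_single_index (by simp), one_smul]

lemma psi_single_mem {i : Fin n} {S : Finset (Fin n)} (h : i ∈ S) :
    psi b Q i (Finsupp.single S 1)
      = (sg i S * Q (b i)) • Finsupp.single (S.erase i) (1 : k) := by
  rw [psi_single, if_pos h]

lemma psi_single_not_mem {i : Fin n} {S : Finset (Fin n)} (h : i ∉ S) :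
    psi b Q i (Finsupp.single S 1)
      = (sg i S : k) • Finsupp.single (insert i S) (1 : k) := by
  rw [psi_single, if_neg h]

lemma psi_psi_single (i : Fin n) (S : Finset (Fin n)) :
    psi b Q i (psi b Q i (Finsupp.single S 1)) = Q (b i) • Finsupp.single S 1 := by
  by_cases h : i ∈ S
  · rw [psi_single_mem b Q h, map_smul,
      psi_single_not_mem b Q (Finset.notMem_erase i S),
      sg_erase_of_not_lt (lt_irrefl i), Finset.insert_erase h, smul_smul]
    congr 1
    rw [mul_comm (sg i S) (Q (b i)), mul_assoc, sg_mul_self, mul_one]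
  · rw [psi_single_not_mem b Q h, map_smul,
      psi_single_mem b Q (Finset.mem_insert_self i S),
      sg_insert_of_not_lt (lt_irrefl i), Finset.erase_insert h, smul_smul]
    congr 1
    rw [← mul_assoc, sg_mul_self, one_mul]

lemma erase_insert_comm' {i j : Fin n} (h : i ≠ j) (S : Finset (Fin n)) :
    (insert j S).erase i = insert j (S.erase i) := by
  ext x
  simp only [Finset.mem_erase, Finset.mem_insert]
  constructor
  · rintro ⟨hx, rfl | hx2⟩
    · exact Or.inl rfl
    · exact Or.inr ⟨hx, hx2⟩
  · rintro (rfl | ⟨hx, hx2⟩)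
    · exact ⟨(Ne.symm h), Or.inl rfl⟩
    · exact ⟨hx, Or.inr hx2⟩

lemma psi_anti_single_of_lt {i j : Fin n} (hij : i < j) (S : Finset (Fin n)) :
    psi b Q i (psi b Q j (Finsupp.single S 1))
      = - psi b Q j (psi b Q i (Finsupp.single S 1)) := by
  have hne : i ≠ j := ne_of_lt hij
  have hnlt : ¬ j < i := not_lt_of_gt hij
  by_cases hi : i ∈ S <;> by_cases hj : j ∈ S
  · rw [psi_single_mem b Q hj, map_smul,
      psi_single_mem b Q (Finset.mem_erase.mpr ⟨hne, hi⟩),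
      psi_single_mem b Q hi, map_smul,
      psi_single_mem b Q (Finset.mem_erase.mpr ⟨Ne.symm hne, hj⟩),
      sg_erase_of_not_lt hnlt, sg_erase_of_lt hij hi,
      Finset.erase_right_comm (a := i) (b := j)]
    rw [smul_smul, smul_smul, ← neg_smul]
    congr 1
    ring
  · rw [psi_single_not_mem b Q hj, map_smul,
      psi_single_mem b Q (Finset.mem_insert_of_mem hi),
      psi_single_mem b Q hi, map_smul,
      psi_single_not_mem b Q (fun hmem => hj (Finset.mem_of_mem_erase hmem)),
      sg_insert_of_not_lt hnlt, sg_erase_of_lt hij hi,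
      erase_insert_comm' hne]
    rw [smul_smul, smul_smul, ← neg_smul]
    congr 1
    ring
  · rw [psi_single_mem b Q hj, map_smul,
      psi_single_not_mem b Q (fun hmem => hi (Finset.mem_of_mem_erase hmem)),
      psi_single_not_mem b Q hi, map_smul,
      psi_single_mem b Q (Finset.mem_insert_of_mem hj),
      sg_erase_of_not_lt hnlt, sg_insert_of_lt hij hi,
      erase_insert_comm' (Ne.symm hne)]
    rw [smul_smul, smul_smul, ← neg_smul]
    congr 1
    ring
  · rw [psi_single_not_mem b Q hj, map_smul,
      psi_single_not_mem b Q (show i ∉ insert j S by simp [Finset.mem_insert, hi, hne]),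
      psi_single_not_mem b Q hi, map_smul,
      psi_single_not_mem b Q (show j ∉ insert i S by simp [Finset.mem_insert, hj, Ne.symm hne]),
      sg_insert_of_not_lt hnlt, sg_insert_of_lt hij hi,
      Finset.insert_comm]
    rw [smul_smul, smul_smul, ← neg_smul]
    congr 1
    ring

lemma psi_anti_single {i j : Fin n} (hij : i ≠ j) (S : Finset (Fin n)) :
    psi b Q i (psi b Q j (Finsupp.single S 1))
      = - psi b Q j (psi b Q i (Finsupp.single S 1)) := by
  rcases lt_or_gt_of_ne hij with h | h
  · exact psi_anti_single_of_lt b Q h S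
  · rw [psi_anti_single_of_lt b Q h S, neg_neg]

noncomputable def rho : V →ₗ[k] Module.End k (Finset (Fin n) →₀ k) :=
  b.constr k fun i => psi b Q i

include horth in
lemma rho_key (v w : V) :
    rho b Q v * rho b Q w + rho b Q w * rho b Q v
      = algebraMap k _ (QuadraticMap.polar Q v w) := by
  have H : ∀ i j : Fin n,
      rho b Q (b i) * rho b Q (b j) + rho b Q (b j) * rho b Q (b i)
        = algebraMap k (Module.End k (Finset (Fin n) →₀ k)) (QuadraticMap.polar Q (b i) (b j)) := by
    intro i j
    rw [rho, Module.Basis.constr_basis, Module.Basis.constr_basis]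
    rcases eq_or_ne i j with rfl | hij
    · rw [QuadraticMap.polar_self, Module.algebraMap_end_eq_smul_id]
      refine Finsupp.lhom_ext fun S c => ?_
      have h1 : Finsupp.single S c = c • Finsupp.single S (1 : k) := by
        rw [Finsupp.smul_single, smul_eq_mul, mul_one]
      rw [h1]
      simp only [LinearMap.add_apply, Module.End.mul_apply, map_smul, LinearMap.smul_apply,
        LinearMap.id_apply]
      rw [psi_psi_single]
      module
    · have hpolar : QuadraticMap.polar Q (b i) (b j) = 0 :=
        QuadraticMap.IsOrtho.polar_eq_zero (QuadraticMap.isOrtho_def.mpr (horth i j hij))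
      rw [hpolar, map_zero]
      refine Finsupp.lhom_ext fun S c => ?_
      have h1 : Finsupp.single S c = c • Finsupp.single S (1 : k) := by
        rw [Finsupp.smul_single, smul_eq_mul, mul_one]
      rw [h1]
      simp only [LinearMap.add_apply, Module.End.mul_apply, map_smul, LinearMap.zero_apply]
      rw [psi_anti_single b Q hij]
      simp
  -- bilinearity
  let F1 : V →ₗ[k] V →ₗ[k] Module.End k (Finset (Fin n) →₀ k) :=
    LinearMap.mk₂ k (fun v w => rho b Q v * rho b Q w + rho b Q w * rho b Q v)
      (fun v v' w => by simp only [map_add, add_mul, mul_add]; abel)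
      (fun c v w => by
        simp only [map_smul, smul_mul_assoc, mul_smul_comm, smul_add])
      (fun v w w' => by simp only [map_add, add_mul, mul_add]; abel)
      (fun c v w => by
        simp only [map_smul, smul_mul_assoc, mul_smul_comm, smul_add])
  let F2 : V →ₗ[k] V →ₗ[k] Module.End k (Finset (Fin n) →₀ k) :=
    LinearMap.mk₂ k (fun v w => algebraMap k _ (QuadraticMap.polar Q v w))
      (fun v v' w => by
        simp only [QuadraticMap.polar_add_left, map_add])
      (fun c v w => by
        simp only [QuadraticMap.polar_smul_left, smul_eq_mul, map_mul, ← Algebra.smul_def])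
      (fun v w w' => by
        simp only [QuadraticMap.polar_add_right, map_add])
      (fun c v w => by
        simp only [QuadraticMap.polar_smul_right, smul_eq_mul, map_mul, ← Algebra.smul_def])
  have hF : F1 = F2 := b.ext fun i => b.ext fun j => H i j
  exact LinearMap.congr_fun (LinearMap.congr_fun hF v) w

include horth in
lemma rho_sq (hchar : (2 : k) ≠ 0) (v : V) :
    rho b Q v * rho b Q v = algebraMap k (Module.End k (Finset (Fin n) →₀ k)) (Q v) := by
  have h := rho_key b Q horth v v
  rw [QuadraticMap.polar_self] at h
  apply smul_right_injective (Module.End k (Finset (Fin n) →₀ k)) hchar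
  simp only []
  rw [two_smul, h, two_smul ℕ (Q v), map_add, two_smul]

noncomputable def rhoHat (hchar : (2 : k) ≠ 0) : CliffordAlgebra Q →ₐ[k] Module.End k (Finset (Fin n) →₀ k) :=
  CliffordAlgebra.lift Q ⟨rho b Q, rho_sq b Q horth hchar⟩

lemma rhoHat_ι (hchar : (2 : k) ≠ 0) (v : V) :
    rhoHat b Q horth hchar (ι Q v) = rho b Q v :=
  CliffordAlgebra.lift_ι_apply _ _ v

def Dl (l : List (Fin n)) : Finset (Fin n) :=
  Finset.univ.filter (fun i => l.count i % 2 = 1)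

@[simp] lemma Dl_nil : Dl ([] : List (Fin n)) = ∅ := by
  simp [Dl]

lemma Dl_cons (j : Fin n) (l : List (Fin n)) :
    Dl (j :: l) = symmDiff {j} (Dl l) := by
  ext i
  simp only [Dl, Finset.mem_filter, Finset.mem_univ, true_and, Finset.mem_symmDiff,
    Finset.mem_singleton]
  rcases eq_or_ne i j with rfl | h
  · rw [List.count_cons_self]
    simp only [eq_self_iff_true, true_and, not_true, and_false, or_false]
    omega
  · rw [List.count_cons_of_ne h.symm]
    simp [h]

lemma Dl_append (l₁ l₂ : List (Fin n)) :
    Dl (l₁ ++ l₂) = symmDiff (Dl l₁) (Dl l₂) := by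
  ext i
  simp only [Dl, Finset.mem_filter, Finset.mem_univ, true_and, Finset.mem_symmDiff,
    List.count_append]
  omega

lemma symmDiff_singleton_mem {i : Fin n} {U : Finset (Fin n)} (h : i ∈ U) :
    symmDiff ({i} : Finset (Fin n)) U = U.erase i := by
  ext x
  simp only [Finset.mem_symmDiff, Finset.mem_singleton, Finset.mem_erase]
  constructor
  · rintro (⟨rfl, hx⟩ | ⟨hx1, hx2⟩)
    · exact absurd h hx
    · exact ⟨hx2, hx1⟩
  · rintro ⟨hx1, hx2⟩
    exact Or.inr ⟨hx2, hx1⟩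

lemma symmDiff_singleton_not_mem {i : Fin n} {U : Finset (Fin n)} (h : i ∉ U) :
    symmDiff ({i} : Finset (Fin n)) U = insert i U := by
  ext x
  simp only [Finset.mem_symmDiff, Finset.mem_singleton, Finset.mem_insert]
  constructor
  · rintro (⟨rfl, hx⟩ | ⟨hx1, hx2⟩)
    · exact Or.inl rfl
    · exact Or.inr hx1
  · rintro (rfl | hx)
    · exact Or.inl ⟨rfl, h⟩
    · refine Or.inr ⟨hx, fun hxx => h ?_⟩
      rwa [← hxx]

lemma psi_single_symmDiff (i : Fin n) (U : Finset (Fin n)) :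
    ∃ c : k, psi b Q i (Finsupp.single U 1)
      = c • Finsupp.single (symmDiff ({i} : Finset (Fin n)) U) (1 : k) := by
  by_cases h : i ∈ U
  · exact ⟨sg i U * Q (b i), by rw [psi_single_mem b Q h, symmDiff_singleton_mem h]⟩
  · exact ⟨sg i U, by rw [psi_single_not_mem b Q h, symmDiff_singleton_not_mem h]⟩

section
variable (hchar : (2 : k) ≠ 0)
include horth

lemma FA (l : List (Fin n)) (U : Finset (Fin n)) :
    ∃ c : k, rhoHat b Q horth hchar (eL b Q l) (Finsupp.single U 1)
      = c • Finsupp.single (symmDiff (Dl l) U) (1 : k) := by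
  induction l with
  | nil =>
    refine ⟨1, ?_⟩
    rw [eL_nil, map_one, Dl_nil,
      show symmDiff (∅ : Finset (Fin n)) U = U from bot_symmDiff U, one_smul]
    simp
  | cons j t ih =>
    obtain ⟨c, hc⟩ := ih
    rw [eL_cons, map_mul, Module.End.mul_apply, hc, map_smul, rhoHat_ι,
      rho, Module.Basis.constr_basis]
    obtain ⟨c', hc'⟩ := psi_single_symmDiff b Q j (symmDiff (Dl t) U)
    rw [hc', smul_smul, ← symmDiff_assoc, ← Dl_cons]
    exact ⟨c * c', rfl⟩

noncomputable def phi : CliffordAlgebra Q →ₗ[k] k where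
  toFun x := (rhoHat b Q horth hchar x (Finsupp.single ∅ 1)) Finset.univ
  map_add' x y := by simp
  map_smul' c x := by simp

lemma phi_eL_of_ne (l : List (Fin n)) (hD : Dl l ≠ Finset.univ) :
    phi b Q horth hchar (eL b Q l) = 0 := by
  obtain ⟨c, hc⟩ := FA b Q horth hchar l ∅
  rw [show symmDiff (Dl l) (∅ : Finset (Fin n)) = Dl l from symmDiff_bot _] at hc
  show (rhoHat b Q horth hchar (eL b Q l) (Finsupp.single ∅ 1)) Finset.univ = 0
  rw [hc]
  simp [Finsupp.single_eq_of_ne' hD]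

lemma sorted_action (l : List (Fin n)) (hl : List.Pairwise (· < ·) l) :
    rhoHat b Q horth hchar (eL b Q l) (Finsupp.single ∅ 1)
      = Finsupp.single l.toFinset (1 : k) := by
  induction l with
  | nil =>
    rw [eL_nil, map_one]
    simp
  | cons i t ih =>
    have hi : ∀ x ∈ t, i < x := fun x hx => (List.pairwise_cons.mp hl).1 x hx
    have ht : List.Pairwise (· < ·) t := (List.pairwise_cons.mp hl).2
    rw [eL_cons, map_mul, Module.End.mul_apply, ih ht, rhoHat_ι, rho, Module.Basis.constr_basis]
    have hnot : i ∉ t.toFinset := fun hmem =>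
      lt_irrefl i (hi i (List.mem_toFinset.mp hmem))
    rw [psi_single_not_mem b Q hnot]
    have hcnt : cnt i t.toFinset = 0 := by
      rw [cnt, Finset.card_eq_zero, Finset.filter_eq_empty_iff]
      intro x hx
      exact not_lt_of_gt (hi x (List.mem_toFinset.mp hx))
    rw [sg, hcnt, pow_zero, one_smul, List.toFinset_cons]

lemma phi_top : phi b Q horth hchar (eL b Q (List.finRange n)) = 1 := by
  show (rhoHat b Q horth hchar (eL b Q (List.finRange n)) (Finsupp.single ∅ 1)) Finset.univ = 1
  rw [sorted_action b Q horth hchar _ (List.pairwise_lt_finRange n), List.toFinset_finRange]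
  simp

end

section Main
variable (hchar : (2 : k) ≠ 0)
include horth

lemma phi_comm_lists (l₁ l₂ : List (Fin n)) :
    phi b Q horth hchar (eL b Q l₁ * eL b Q l₂)
      = (-1 : k) ^ (l₁.length * l₂.length) * phi b Q horth hchar (eL b Q l₂ * eL b Q l₁) := by
  rw [← eL_append, ← eL_append]
  by_cases hD : symmDiff (Dl l₁) (Dl l₂) = Finset.univ
  · have hodd : ∀ i : Fin n, (l₁.count i + l₂.count i) % 2 = 1 := by
      intro i
      have hmem : i ∈ symmDiff (Dl l₁) (Dl l₂) := hD ▸ Finset.mem_univ i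
      rw [Finset.mem_symmDiff] at hmem
      simp only [Dl, Finset.mem_filter, Finset.mem_univ, true_and] at hmem
      omega
    have hkap : kap l₁ l₂ % 2 = 0 := by
      rw [kap, Finset.sum_list_map_count, Finset.sum_nat_mod]
      have : ∀ m ∈ l₁.toFinset, l₁.count m • l₂.count m % 2 = 0 := by
        intro m _
        have := hodd m
        rw [smul_eq_mul]
        rcases Nat.even_or_odd (l₁.count m) with he | ho
        · obtain ⟨t, ht⟩ := he
          rw [ht, show (t + t) * l₂.count m = 2 * (t * l₂.count m) by ring,
            Nat.mul_mod_right]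
        · obtain ⟨t, ht⟩ := ho
          have h2 : l₂.count m % 2 = 0 := by omega
          obtain ⟨u, hu⟩ : 2 ∣ l₂.count m := Nat.dvd_of_mod_eq_zero h2
          rw [hu, show l₁.count m * (2 * u) = 2 * (l₁.count m * u) by ring,
            Nat.mul_mod_right]
      rw [Finset.sum_congr rfl this, Finset.sum_const, smul_zero]
      rfl
    rw [rot b Q horth l₁ l₂, map_smul, smul_eq_mul]
    congr 1
    exact sgn_eq (by omega)
  · have h1 : Dl (l₁ ++ l₂) ≠ Finset.univ := by rw [Dl_append]; exact hD
    have h2 : Dl (l₂ ++ l₁) ≠ Finset.univ := by rw [Dl_append, symmDiff_comm]; exact hD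
    rw [phi_eL_of_ne b Q horth hchar _ h1, phi_eL_of_ne b Q horth hchar _ h2, mul_zero]

lemma phi_comm (p q : ZMod 2) (a c : CliffordAlgebra Q)
    (ha : a ∈ CliffordAlgebra.evenOdd Q p) (hc : c ∈ CliffordAlgebra.evenOdd Q q) :
    phi b Q horth hchar (a * c)
      = (-1 : k) ^ (p.val * q.val) * phi b Q horth hchar (c * a) := by
  have ha' := evenOdd_le_span b Q p ha
  have hc' := evenOdd_le_span b Q q hc
  clear ha hc
  induction ha' using Submodule.span_induction with
  | mem x hx =>
    obtain ⟨l₁, hl₁, rfl⟩ := hx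
    induction hc' using Submodule.span_induction with
    | mem y hy =>
      obtain ⟨l₂, hl₂, rfl⟩ := hy
      rw [phi_comm_lists b Q horth hchar]
      congr 1
      apply sgn_eq
      have hp : p.val = l₁.length % 2 := by rw [← hl₁, ZMod.val_natCast]
      have hq : q.val = l₂.length % 2 := by rw [← hl₂, ZMod.val_natCast]
      rw [hp, hq]
      exact Nat.mul_mod _ _ _
    | zero => simp
    | add y z _ _ ihy ihz =>
      rw [mul_add, add_mul, map_add, map_add, ihy, ihz, mul_add]
    | smul r y _ ihy =>
      rw [mul_smul_comm, smul_mul_assoc, map_smul, map_smul, smul_eq_mul, smul_eq_mul, ihy]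
      ring
  | zero => simp
  | add y z _ _ ihy ihz =>
    rw [add_mul, mul_add, map_add, map_add, ihy, ihz, mul_add]
  | smul r y _ ihy =>
    rw [smul_mul_assoc, mul_smul_comm, map_smul, map_smul, smul_eq_mul, smul_eq_mul, ihy]
    ring

include hchar in
lemma A1 (hQ : ∀ i, Q (b i) ≠ 0) (T : Submodule k (CliffordAlgebra Q))
    (hgen : ∀ (p q : ZMod 2) (a c : CliffordAlgebra Q),
      a ∈ CliffordAlgebra.evenOdd Q p → c ∈ CliffordAlgebra.evenOdd Q q →
      a * c - ((-1 : k) ^ (p.val * q.val)) • (c * a) ∈ T) :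
    ∀ (N : ℕ) (l : List (Fin n)), l.length ≤ N →
      eL b Q l ∈ T ⊔ Submodule.span k {eL b Q (List.finRange n)} := by
  intro N
  induction N using Nat.strong_induction_on with
  | _ N ih =>
  intro l hl
  by_cases hnd : l.Nodup
  · by_cases huniv : l.toFinset = Finset.univ
    · obtain ⟨c, hc⟩ := perm_eL b Q horth
        (List.perm_of_nodup_nodup_toFinset_eq hnd (List.nodup_finRange n)
          (by rw [huniv, List.toFinset_finRange]))
      rw [hc]
      exact Submodule.mem_sup_right (Submodule.smul_mem _ _ (Submodule.subset_span rfl))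
    · obtain ⟨i, hi⟩ : ∃ i, i ∉ l.toFinset := by
        by_contra h
        push_neg at h
        exact huniv (Finset.eq_univ_iff_forall.mpr h)
      have hil : i ∉ l := fun h => hi (List.mem_toFinset.mpr h)
      have hcnt : l.count i = 0 := List.count_eq_zero_of_not_mem hil
      have hmemc : ι Q (b i) * eL b Q l
          ∈ CliffordAlgebra.evenOdd Q ((l.length + 1 : ℕ) : ZMod 2) := by
        have h0 := eL_mem b Q (i :: l)
        rw [eL_cons] at h0
        simpa using h0
      have hgenx := hgen 1 ((l.length + 1 : ℕ) : ZMod 2) (ι Q (b i)) (ι Q (b i) * eL b Q l)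
        (CliffordAlgebra.ι_mem_evenOdd_one Q (b i)) hmemc
      have hac : ι Q (b i) * (ι Q (b i) * eL b Q l) = Q (b i) • eL b Q l := by
        rw [← mul_assoc, CliffordAlgebra.ι_sq_scalar, ← Algebra.smul_def]
      have hca : (ι Q (b i) * eL b Q l) * ι Q (b i)
          = ((-1 : k) ^ l.length * Q (b i)) • eL b Q l := by
        rw [move b Q horth, hcnt, add_zero, smul_mul_assoc, mul_assoc,
          CliffordAlgebra.ι_sq_scalar, ← Algebra.commutes, ← Algebra.smul_def, smul_smul]
      have hval : ((1 : ZMod 2)).val * (((l.length + 1 : ℕ) : ZMod 2)).val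
          = (l.length + 1) % 2 := by
        rw [show ((1 : ZMod 2)).val = 1 by rfl, one_mul, ZMod.val_natCast]
      have hsgn : (-1 : k) ^ ((l.length + 1) % 2) * (-1 : k) ^ l.length = -1 := by
        rw [← pow_add, sgn_eq (a := (l.length + 1) % 2 + l.length) (c := 1) (by omega), pow_one]
      have hcoef : Q (b i) - (-1 : k) ^ ((l.length + 1) % 2) * ((-1 : k) ^ l.length * Q (b i))
          = 2 * Q (b i) := by
        rw [← mul_assoc, hsgn]
        ring
      have hx : ι Q (b i) * (ι Q (b i) * eL b Q l)
            - ((-1 : k) ^ (((1 : ZMod 2)).val * (((l.length + 1 : ℕ) : ZMod 2)).val))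
              • ((ι Q (b i) * eL b Q l) * ι Q (b i))
          = (2 * Q (b i)) • eL b Q l := by
        rw [hac, hca, hval, smul_smul, ← sub_smul, hcoef]
      have h2Q : (2 * Q (b i)) ≠ 0 := mul_ne_zero hchar (hQ i)
      have heq : eL b Q l = (2 * Q (b i))⁻¹ • ((2 * Q (b i)) • eL b Q l) :=
        (inv_smul_smul₀ h2Q _).symm
      rw [heq, ← hx]
      exact Submodule.mem_sup_left (Submodule.smul_mem _ _ hgenx)
  · have hdup : ∃ l₁ i l₂, l = l₁ ++ i :: l₂ ∧ i ∈ l₂ := by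
      rw [List.nodup_iff_count_le_one] at hnd
      push_neg at hnd
      obtain ⟨i, hcnt2⟩ := hnd
      have him : i ∈ l := by
        by_contra hm
        rw [List.count_eq_zero_of_not_mem hm] at hcnt2
        omega
      obtain ⟨s, t, rfl⟩ := List.append_of_mem him
      by_cases hit : i ∈ t
      · exact ⟨s, i, t, rfl, hit⟩
      · have his : i ∈ s := by
          rw [List.count_append, List.count_cons_self, List.count_eq_zero_of_not_mem hit]
            at hcnt2
          have hpos : 0 < s.count i := by omega
          exact List.count_pos_iff.mp hpos
        obtain ⟨s₁, s₂, rfl⟩ := List.append_of_mem his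
        exact ⟨s₁, i, s₂ ++ i :: t, by simp, by simp⟩
    obtain ⟨l₁, i, l₂, rfl, hil₂⟩ := hdup
    obtain ⟨l₃, l₄, rfl⟩ := List.append_of_mem hil₂
    have hred : eL b Q (l₁ ++ i :: (l₃ ++ i :: l₄))
        = (((-1 : k) ^ (l₃.length + l₃.count i)) * Q (b i)) • eL b Q (l₁ ++ (l₃ ++ l₄)) := by
      rw [eL_append, eL_cons, eL_append, eL_cons, eL_append, eL_append]
      calc eL b Q l₁ * (ι Q (b i) * (eL b Q l₃ * (ι Q (b i) * eL b Q l₄)))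
          = eL b Q l₁ * ((ι Q (b i) * eL b Q l₃) * (ι Q (b i) * eL b Q l₄)) := by
            rw [mul_assoc]
        _ = eL b Q l₁ * ((((-1 : k) ^ (l₃.length + l₃.count i))
              • (eL b Q l₃ * ι Q (b i))) * (ι Q (b i) * eL b Q l₄)) := by
            rw [move b Q horth i l₃]
        _ = eL b Q l₁ * (((-1 : k) ^ (l₃.length + l₃.count i))
              • (eL b Q l₃ * ((ι Q (b i) * (ι Q (b i) * eL b Q l₄))))) := by
            rw [smul_mul_assoc, mul_assoc]
        _ = eL b Q l₁ * (((-1 : k) ^ (l₃.length + l₃.count i))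
              • (eL b Q l₃ * (Q (b i) • eL b Q l₄))) := by
            rw [← mul_assoc (ι Q (b i)), CliffordAlgebra.ι_sq_scalar, ← Algebra.smul_def]
        _ = (((-1 : k) ^ (l₃.length + l₃.count i)) * Q (b i))
              • (eL b Q l₁ * (eL b Q l₃ * eL b Q l₄)) := by
            simp only [mul_smul_comm, smul_smul]
    rw [hred]
    have hlen : (l₁ ++ (l₃ ++ l₄)).length ≤ N - 1 := by
      simp only [List.length_append, List.length_cons] at hl ⊢
      omega
    have hN : N - 1 < N := by
      simp only [List.length_append, List.length_cons] at hl
      omega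
    exact Submodule.smul_mem _ _ (ih (N - 1) hN _ hlen)

end Main

end Stmt15

open Stmt15 in
/-- the quotient of the Clifford algebra of a nondegenerate diagonal
quadratic form by the span of graded commutators is one-dimensional, spanned by the
image of the top ordered monomial `ι(e₁)⋯ι(e_n)`. -/
theorem stmt_15 {k V : Type*} [Field k] [AddCommGroup V] [Module k V]
    (hchar : (2 : k) ≠ 0) (n : ℕ) (b : Module.Basis (Fin n) k V)
    (Q : QuadraticForm k V)
    (horth : ∀ i j, i ≠ j → Q (b i + b j) = Q (b i) + Q (b j))
    (hQ : ∀ i, Q (b i) ≠ 0) :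
    let T : Submodule k (CliffordAlgebra Q) :=
      Submodule.span k {x : CliffordAlgebra Q |
        ∃ (p q : ZMod 2) (a c : CliffordAlgebra Q),
          a ∈ CliffordAlgebra.evenOdd Q p ∧ c ∈ CliffordAlgebra.evenOdd Q q ∧
          x = a * c - ((-1 : k) ^ (p.val * q.val)) • (c * a)}
    let top : CliffordAlgebra Q ⧸ T :=
      Submodule.Quotient.mk (((List.finRange n).map fun i => CliffordAlgebra.ι Q (b i)).prod)
    Module.finrank k (CliffordAlgebra Q ⧸ T) = 1 ∧
      Submodule.span k ({top} : Set (CliffordAlgebra Q ⧸ T)) = ⊤ := by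
  intro T top
  have hgen : ∀ (p q : ZMod 2) (a c : CliffordAlgebra Q),
      a ∈ CliffordAlgebra.evenOdd Q p → c ∈ CliffordAlgebra.evenOdd Q q →
      a * c - ((-1 : k) ^ (p.val * q.val)) • (c * a) ∈ T :=
    fun p q a c ha hc => Submodule.subset_span ⟨p, q, a, c, ha, hc, rfl⟩
  have hsup : T ⊔ Submodule.span k {eL b Q (List.finRange n)} = ⊤ := by
    rw [eq_top_iff, ← span_eL_top b Q]
    refine Submodule.span_le.mpr ?_
    rintro x ⟨l, rfl⟩
    exact A1 b Q horth hchar hQ T hgen l.length l le_rfl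
  have hker : T ≤ LinearMap.ker (phi b Q horth hchar) := by
    refine Submodule.span_le.mpr ?_
    rintro x ⟨p, q, a, c, ha, hc, rfl⟩
    rw [SetLike.mem_coe, LinearMap.mem_ker, map_sub, map_smul,
      phi_comm b Q horth hchar p q a c ha hc, smul_eq_mul, sub_self]
  have htot : phi b Q horth hchar (eL b Q (List.finRange n)) = 1 := phi_top b Q horth hchar
  have htopeq : top = Submodule.Quotient.mk (eL b Q (List.finRange n)) := rfl
  have htopne : top ≠ 0 := by
    intro h0
    rw [htopeq, Submodule.Quotient.mk_eq_zero] at h0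
    have hk := hker h0
    rw [LinearMap.mem_ker, htot] at hk
    exact one_ne_zero hk
  have hspan : Submodule.span k ({top} : Set (CliffordAlgebra Q ⧸ T)) = ⊤ := by
    rw [eq_top_iff]
    rintro x -
    obtain ⟨y, rfl⟩ := Submodule.Quotient.mk_surjective T x
    have hy : y ∈ T ⊔ Submodule.span k {eL b Q (List.finRange n)} :=
      hsup ▸ Submodule.mem_top
    obtain ⟨t, ht, z, hz, rfl⟩ := Submodule.mem_sup.mp hy
    obtain ⟨c, rfl⟩ := Submodule.mem_span_singleton.mp hz
    have hmk : (Submodule.Quotient.mk (t + c • eL b Q (List.finRange n)) :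
        CliffordAlgebra Q ⧸ T) = c • top := by
      rw [htopeq, Submodule.Quotient.mk_add, Submodule.Quotient.mk_smul,
        (Submodule.Quotient.mk_eq_zero T).mpr ht, zero_add]
    rw [hmk]
    exact Submodule.smul_mem _ _ (Submodule.subset_span rfl)
  refine ⟨?_, hspan⟩
  refine finrank_eq_one top htopne ?_
  intro w
  exact Submodule.mem_span_singleton.mp (hspan ▸ Submodule.mem_top)
end

section
/- Let n ≥ 3 be a natural number and let λ₂, λ₃, r be real numbers with λ₃ < λ₂ and r > λ₂ + n(λ₂ − λ₃). Set a = r − n(λ₂ − λ₃). Then the set { (u₁,u₂,u₃) ∈ ℝ³ : λ₃ ≤ u₂ ≤ λ₂ ≤ u₁, u₂ ≤ u₃ ≤ u₁, u₁ + n·u₂ ≤ r + n·λ₃, u₁ + u₂ = 2u₃ } equals the convex hull in ℝ³ of the four points (λ₂, λ₂, λ₂), (a, λ₂, (a+λ₂)/2), (r, λ₃, (r+λ₃)/2), and (λ₂, λ₃, (λ₂+λ₃)/2). -/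
/-!
The slice is cut out by linear constraints, so it is convex and contains the hull of the four
vertices, which satisfy them. Conversely it is a quadrilateral: writing `y = l3 + s (l2 - l3)`,
its section at height `y` is the segment from the edge `x = l2` to the edge
`x = r - n (y - l3)`, and `z = (x + y) / 2` is determined, so every point of it is
`(1 - t) (s A + (1 - s) D) + t (s B + (1 - s) C)` with `s, t ∈ [0, 1]`, where `A, B, C, D` are
the four vertices in the order listed.
-/

def gcSlice (n l2 l3 r : ℝ) : Set (ℝ × ℝ × ℝ) :=
  {p | l3 ≤ p.2.1 ∧ p.2.1 ≤ l2 ∧ l2 ≤ p.1 ∧ p.2.1 ≤ p.2.2 ∧ p.2.2 ≤ p.1 ∧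
    p.1 + n * p.2.1 ≤ r + n * l3 ∧ p.1 + p.2.1 = 2 * p.2.2}

def gcSliceVertices (n l2 l3 r : ℝ) : Set (ℝ × ℝ × ℝ) :=
  let a := r - n * (l2 - l3)
  {(l2, l2, l2), (a, l2, (a + l2) / 2), (r, l3, (r + l3) / 2), (l2, l3, (l2 + l3) / 2)}

theorem Convex.smul_add_smul_mem_of_four {𝕜 E : Type*} [Ring 𝕜] [PartialOrder 𝕜]
    [IsOrderedRing 𝕜] [AddCommGroup E] [Module 𝕜 E] {K : Set E} (hK : Convex 𝕜 K)
    {A B C D : E} (hA : A ∈ K) (hB : B ∈ K) (hC : C ∈ K) (hD : D ∈ K) {s t : 𝕜}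
    (hs₀ : 0 ≤ s) (hs₁ : s ≤ 1) (ht₀ : 0 ≤ t) (ht₁ : t ≤ 1) :
    (1 - t) • (s • A + (1 - s) • D) + t • (s • B + (1 - s) • C) ∈ K :=
  hK (hK hA hD hs₀ (sub_nonneg.2 hs₁) (add_sub_cancel s 1))
    (hK hB hC hs₀ (sub_nonneg.2 hs₁) (add_sub_cancel s 1)) (sub_nonneg.2 ht₁) ht₀
    (sub_add_cancel 1 t)

section

variable {n l2 l3 r : ℝ}

theorem convex_gcSlice : Convex ℝ (gcSlice n l2 l3 r) := by
  rintro ⟨x, y, z⟩ ⟨h₁, h₂, h₃, h₄, h₅, h₆, h₇⟩ ⟨x', y', z'⟩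
    ⟨h₁', h₂', h₃', h₄', h₅', h₆', h₇'⟩ a b ha hb hab
  simp only [Prod.smul_mk, Prod.mk_add_mk, smul_eq_mul]
  refine ⟨?_, ?_, ?_, ?_, ?_, ?_, ?_⟩
  · linear_combination a * h₁ + b * h₁' - l3 * hab
  · linear_combination a * h₂ + b * h₂' + l2 * hab
  · linear_combination a * h₃ + b * h₃' - l2 * hab
  · linear_combination a * h₄ + b * h₄'
  · linear_combination a * h₅ + b * h₅'
  · linear_combination a * h₆ + b * h₆' + (r + n * l3) * hab
  · linear_combination a * h₇ + b * h₇'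

theorem gcSliceVertices_subset_gcSlice (hn : 0 ≤ n) (h32 : l3 < l2)
    (hr : l2 + n * (l2 - l3) < r) : gcSliceVertices n l2 l3 r ⊆ gcSlice n l2 l3 r := by
  have : 0 ≤ n * (l2 - l3) := mul_nonneg hn (sub_nonneg.2 h32.le)
  rintro p (rfl | rfl | rfl | rfl) <;>
    exact ⟨by linarith, by linarith, by linarith, by linarith, by linarith, by linarith,
      by ring⟩

theorem gcSlice_subset_convexHull (hn : 0 ≤ n) (h32 : l3 < l2)
    (hr : l2 + n * (l2 - l3) < r) :
    gcSlice n l2 l3 r ⊆ convexHull ℝ (gcSliceVertices n l2 l3 r) := by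
  rintro ⟨x, y, z⟩ ⟨hl3y, hyl2, hl2x, -, -, hxy, hz⟩
  have hl : 0 < l2 - l3 := sub_pos.2 h32
  set w := r - n * (y - l3) - l2
  have hw : 0 < w := by linarith [mul_le_mul_of_nonneg_left (sub_le_sub_right hyl2 l3) hn]
  set s := (y - l3) / (l2 - l3)
  set t := (x - l2) / w
  have hs : y - l3 = s * (l2 - l3) := (div_mul_cancel₀ _ hl.ne').symm
  have ht : x - l2 = t * w := (div_mul_cancel₀ _ hw.ne').symm
  have hpt : ((x, y, z) : ℝ × ℝ × ℝ) =
      (1 - t) • (s • (l2, l2, l2) + (1 - s) • (l2, l3, (l2 + l3) / 2)) +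
        t • (s • (r - n * (l2 - l3), l2, (r - n * (l2 - l3) + l2) / 2) +
          (1 - s) • (r, l3, (r + l3) / 2)) := by
    simp only [Prod.smul_mk, Prod.mk_add_mk, Prod.mk.injEq, smul_eq_mul]
    refine ⟨?_, ?_, ?_⟩
    · linear_combination ht - t * n * hs
    · linear_combination hs
    · linear_combination (1 / 2) * ht + ((1 - t * n) / 2) * hs - (1 / 2) * hz
  rw [hpt]
  refine (convex_convexHull ℝ _).smul_add_smul_mem_of_four ?_ ?_ ?_ ?_
    (div_nonneg (sub_nonneg.2 hl3y) hl.le) ((div_le_one hl).2 (by linarith))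
    (div_nonneg (sub_nonneg.2 hl2x) hw.le) ((div_le_one hw).2 (by linarith)) <;>
  exact subset_convexHull ℝ _ (by simp [gcSliceVertices])

theorem gcSlice_eq_convexHull (hn : 0 ≤ n) (h32 : l3 < l2) (hr : l2 + n * (l2 - l3) < r) :
    gcSlice n l2 l3 r = convexHull ℝ (gcSliceVertices n l2 l3 r) :=
  (gcSlice_subset_convexHull hn h32 hr).antisymm
    (convexHull_min (gcSliceVertices_subset_gcSlice hn h32 hr) convex_gcSlice)

end

theorem stmt_19_general (n : ℕ) (l2 l3 r : ℝ)
    (h32 : l3 < l2) (hr : r > l2 + (n : ℝ) * (l2 - l3)) :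
    let a : ℝ := r - (n : ℝ) * (l2 - l3)
    {p : ℝ × ℝ × ℝ | l3 ≤ p.2.1 ∧ p.2.1 ≤ l2 ∧ l2 ≤ p.1 ∧
        p.2.1 ≤ p.2.2 ∧ p.2.2 ≤ p.1 ∧ p.1 + (n : ℝ) * p.2.1 ≤ r + (n : ℝ) * l3 ∧
        p.1 + p.2.1 = 2 * p.2.2} =
      convexHull ℝ {(l2, l2, l2), (a, l2, (a + l2) / 2),
        (r, l3, (r + l3) / 2), (l2, l3, (l2 + l3) / 2)} :=
  gcSlice_eq_convexHull n.cast_nonneg h32 hr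

/-- the slice `{u₁ + u₂ = 2u₃}` of the Gelfand–Cetlin polytope of
Woodward's multiplicity-free `U(2)`-manifold is the convex hull of four explicit points. -/
theorem stmt_19 (n : ℕ) (hn : 3 ≤ n) (l2 l3 r : ℝ)
    (h32 : l3 < l2) (hr : r > l2 + (n : ℝ) * (l2 - l3)) :
    let a : ℝ := r - (n : ℝ) * (l2 - l3)
    {p : ℝ × ℝ × ℝ | l3 ≤ p.2.1 ∧ p.2.1 ≤ l2 ∧ l2 ≤ p.1 ∧
        p.2.1 ≤ p.2.2 ∧ p.2.2 ≤ p.1 ∧ p.1 + (n : ℝ) * p.2.1 ≤ r + (n : ℝ) * l3 ∧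
        p.1 + p.2.1 = 2 * p.2.2} =
      convexHull ℝ {(l2, l2, l2), (a, l2, (a + l2) / 2),
        (r, l3, (r + l3) / 2), (l2, l3, (l2 + l3) / 2)} :=
  stmt_19_general n l2 l3 r h32 hr
end
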